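/- arXiv:1810.05317 — 5 statements merged into one kernel-verified Lean document; each statement's English description precedes it below -/
import Mathlib

section
/- For every n ≥ 1, if G is a connected finite simple graph such that for every k the number of independent sets of size k in G equals the number of independent sets of size k in the path P_n, then G is isomorphic to P_n. -/
open SimpleGraph Polynomial Finset

set_option linter.unusedSectionVars false
set_option maxHeartbeats 1000000

/-- The number of independent sets of size `k` in the graph `G`. -/
noncomputable def indepCount {V : Type*} [Fintype V] (G : SimpleGraph V) (k : ℕ) : ℕ :=
  Nat.card {s : Finset V // s.card = k ∧ ∀ u ∈ s, ∀ v ∈ s, ¬ G.Adj u v}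

/-- The graph `D_n`: a triangle on the vertices `0, 1, 2` together with the
pendant path `2 - 3 - ⋯ - (n-1)`. -/
def dGraph (n : ℕ) : SimpleGraph (Fin n) :=
  SimpleGraph.fromRel (fun u v =>
    (u.val = 0 ∧ v.val = 1) ∨ (u.val = 0 ∧ v.val = 2) ∨ (u.val = 1 ∧ v.val = 2) ∨
    (2 ≤ u.val ∧ v.val = u.val + 1))

section Aux

variable {V : Type*} [Fintype V] [DecidableEq V] (H : SimpleGraph V) [DecidableRel H.Adj]

def indepFinset (k : ℕ) : Finset (Finset V) :=
  (Finset.univ.powersetCard k).filter (fun s => ∀ u ∈ s, ∀ v ∈ s, ¬ H.Adj u v)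

def badFinset (k : ℕ) : Finset (Finset V) :=
  (Finset.univ.powersetCard k).filter (fun s => ¬ ∀ u ∈ s, ∀ v ∈ s, ¬ H.Adj u v)

def adjPairs : Finset (V × V) :=
  (univ ×ˢ univ).filter fun p => H.Adj p.1 p.2

abbrev tDist (p : V × V × V) : Prop := p.1 ≠ p.2.1 ∧ p.1 ≠ p.2.2 ∧ p.2.1 ≠ p.2.2

instance : DecidablePred (tDist (V := V)) := fun p => by unfold tDist; infer_instance

def trip (P : V × V × V → Prop) [DecidablePred P] : Finset (V × V × V) :=
  (univ ×ˢ univ ×ˢ univ).filter fun p => tDist p ∧ P p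

lemma indepCount_eq_card (k : ℕ) : indepCount H k = (indepFinset H k).card := by
  classical
  rw [indepCount, Nat.card_eq_fintype_card, Fintype.card_subtype]
  congr 1
  ext s
  simp [indepFinset, Finset.mem_powersetCard_univ, and_comm]

lemma indepCount_one : indepCount H 1 = Fintype.card V := by
  classical
  rw [indepCount_eq_card]
  have : indepFinset H 1 = Finset.univ.powersetCard 1 := by
    apply Finset.filter_true_of_mem
    intro s hs
    rw [Finset.mem_powersetCard_univ, Finset.card_eq_one] at hs
    obtain ⟨a, rfl⟩ := hs
    intro u hu v hv
    simp at hu hv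
    subst hu; subst hv
    exact H.irrefl
  rw [this, Finset.card_powersetCard]
  simp

lemma indep_add_bad (k : ℕ) :
    (indepFinset H k).card + (badFinset H k).card = (Fintype.card V).choose k := by
  classical
  rw [indepFinset, badFinset, Finset.card_filter_add_card_filter_not,
    Finset.card_powersetCard]
  simp

lemma adjPairs_card : (adjPairs H).card = ∑ v, H.degree v := by
  classical
  rw [adjPairs, Finset.card_eq_sum_card_fiberwise (f := Prod.fst) (t := univ)
    (fun x _ => mem_univ _)]
  refine Finset.sum_congr rfl fun v _ => ?_
  rw [← card_neighborFinset_eq_degree]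
  rw [show ((univ ×ˢ univ).filter fun p : V × V => H.Adj p.1 p.2).filter (fun p => p.1 = v)
      = (H.neighborFinset v).map ⟨fun u => (v, u), fun a b hab => by simpa using hab⟩ from ?_,
    Finset.card_map]
  ext ⟨a, b⟩
  simp only [Finset.mem_filter, Finset.mem_product, mem_univ, true_and, Finset.mem_map,
    mem_neighborFinset, Function.Embedding.coeFn_mk, Prod.mk.injEq]
  constructor
  · rintro ⟨hadj, rfl⟩; exact ⟨b, hadj, rfl⟩
  · rintro ⟨u, hu, rfl, rfl⟩; exact ⟨hu, rfl⟩

lemma finset_pair_eq_pair_iff {a b x y : V} (hab : a ≠ b) :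
    ({a, b} : Finset V) = {x, y} ↔ (a = x ∧ b = y) ∨ (a = y ∧ b = x) := by
  constructor
  · intro h
    have ha : a = x ∨ a = y := by
      have : a ∈ ({x, y} : Finset V) := h ▸ (by simp)
      simpa using this
    have hb : b = x ∨ b = y := by
      have : b ∈ ({x, y} : Finset V) := h ▸ (by simp)
      simpa using this
    rcases ha with rfl | rfl <;> rcases hb with rfl | rfl
    · exact absurd rfl hab
    · exact Or.inl ⟨rfl, rfl⟩
    · exact Or.inr ⟨rfl, rfl⟩
    · exact absurd rfl hab
  · rintro (⟨rfl, rfl⟩ | ⟨rfl, rfl⟩)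
    · rfl
    · exact Finset.pair_comm a b

lemma two_mul_bad2 : (adjPairs H).card = 2 * (badFinset H 2).card := by
  classical
  rw [Finset.card_eq_sum_card_fiberwise
    (f := fun p : V × V => ({p.1, p.2} : Finset V)) (t := badFinset H 2) ?_]
  · rw [Finset.sum_congr rfl (g := fun _ => 2) ?_, Finset.sum_const, smul_eq_mul, mul_comm]
    intro s hs
    simp only [badFinset, Finset.mem_filter, Finset.mem_powersetCard_univ] at hs
    obtain ⟨hcard, hbad⟩ := hs
    push_neg at hbad
    obtain ⟨u, hu, v, hv, huv⟩ := hbad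
    obtain ⟨x, y, hxy, rfl⟩ := Finset.card_eq_two.1 hcard
    have hadj : H.Adj x y := by
      simp only [Finset.mem_insert, Finset.mem_singleton] at hu hv
      rcases hu with rfl | rfl <;> rcases hv with rfl | rfl
      · exact absurd huv (H.irrefl ·)
      · exact huv
      · exact huv.symm
      · exact absurd huv (H.irrefl ·)
    have : (adjPairs H).filter (fun p => ({p.1, p.2} : Finset V) = {x, y})
        = {(x, y), (y, x)} := by
      ext ⟨a, b⟩
      simp only [adjPairs, Finset.filter_filter, Finset.mem_filter, Finset.mem_product,
        mem_univ, true_and, Finset.mem_insert, Finset.mem_singleton, Prod.mk.injEq]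
      constructor
      · rintro ⟨hadj', hpair⟩
        rcases (finset_pair_eq_pair_iff hadj'.ne).1 hpair with ⟨rfl, rfl⟩ | ⟨rfl, rfl⟩
        · exact Or.inl ⟨rfl, rfl⟩
        · exact Or.inr ⟨rfl, rfl⟩
      · rintro (⟨rfl, rfl⟩ | ⟨rfl, rfl⟩)
        · exact ⟨hadj, rfl⟩
        · exact ⟨hadj.symm, Finset.pair_comm _ _⟩
    rw [this, Finset.card_insert_of_notMem (by simp [Prod.ext_iff, hxy, Ne.symm hxy]),
      Finset.card_singleton]
  · intro p hp
    simp only [Finset.mem_coe, adjPairs, Finset.mem_filter, Finset.mem_product, mem_univ, true_and] at hp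
    simp only [Finset.mem_coe, badFinset, Finset.mem_filter, Finset.mem_powersetCard_univ]
    refine ⟨Finset.card_pair hp.ne, ?_⟩
    push_neg
    exact ⟨p.1, by simp, p.2, by simp, hp⟩

lemma trip_card_comp (e : (V × V × V) ≃ (V × V × V)) (hd : ∀ p, tDist (e p) ↔ tDist p)
    (P Q : V × V × V → Prop) [DecidablePred P] [DecidablePred Q]
    (hq : ∀ p, Q p ↔ P (e p)) :
    (trip Q).card = (trip P).card := by
  apply Finset.card_bij' (i := fun p _ => e p) (j := fun p _ => e.symm p)
  · intro p hp
    simp only [trip, Finset.mem_filter] at hp ⊢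
    exact ⟨by simp, (hd p).2 hp.2.1, (hq p).1 hp.2.2⟩
  · intro p hp
    simp only [trip, Finset.mem_filter] at hp ⊢
    refine ⟨by simp, ?_, ?_⟩
    · rw [← hd (e.symm p)]; simpa using hp.2.1
    · rw [hq (e.symm p)]; simpa using hp.2.2
  · intro p _; simp
  · intro p _; simp

lemma cardD1 : (trip fun p => H.Adj p.1 p.2.1).card
    = (adjPairs H).card * (Fintype.card V - 2) := by
  rw [Finset.card_eq_sum_card_fiberwise
    (f := fun p : V × V × V => (p.1, p.2.1)) (t := adjPairs H) ?_]
  · rw [Finset.sum_congr rfl (g := fun _ => Fintype.card V - 2) ?_, Finset.sum_const,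
      smul_eq_mul, mul_comm]
    rintro ⟨u, v⟩ hs
    simp only [adjPairs, Finset.mem_filter, Finset.mem_product, mem_univ, true_and] at hs
    have : (trip fun p => H.Adj p.1 p.2.1).filter (fun p => (p.1, p.2.1) = (u, v))
        = (univ \ {u, v}).map ⟨fun w => (u, v, w), fun a b hab => by simpa using hab⟩ := by
      ext ⟨a, b, c⟩
      simp only [trip, tDist, Finset.filter_filter, Finset.mem_filter, Finset.mem_product,
        mem_univ, true_and, Finset.mem_map, Finset.mem_sdiff, Function.Embedding.coeFn_mk,
        Prod.mk.injEq, Finset.mem_insert, Finset.mem_singleton, not_or]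
      constructor
      · rintro ⟨⟨⟨h1, h2, h3⟩, _⟩, rfl, rfl⟩
        exact ⟨c, ⟨Ne.symm h2, Ne.symm h3⟩, rfl⟩
      · rintro ⟨w, ⟨hw1, hw2⟩, rfl, rfl, rfl⟩
        exact ⟨⟨⟨hs.ne, Ne.symm hw1, Ne.symm hw2⟩, hs⟩, rfl, rfl⟩
    rw [this, Finset.card_map, Finset.card_sdiff_of_subset (by simp), Finset.card_univ,
      Finset.card_pair hs.ne]
  · intro p hp
    simp only [Finset.mem_coe, trip, tDist, Finset.mem_filter] at hp
    simp only [Finset.mem_coe, adjPairs, Finset.mem_filter, Finset.mem_product, mem_univ, true_and]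
    exact hp.2.2

lemma cardA1 : (trip fun p => H.Adj p.1 p.2.1 ∧ H.Adj p.1 p.2.2).card
    = ∑ v, (H.degree v * H.degree v - H.degree v) := by
  rw [Finset.card_eq_sum_card_fiberwise (f := fun p : V × V × V => p.1) (t := univ)
    (fun x _ => mem_univ _)]
  refine Finset.sum_congr rfl fun u _ => ?_
  have : (trip fun p => H.Adj p.1 p.2.1 ∧ H.Adj p.1 p.2.2).filter (fun p => p.1 = u)
      = (H.neighborFinset u).offDiag.map
        ⟨fun q => (u, q.1, q.2), fun a b hab => by
          simpa [Prod.ext_iff] using hab⟩ := by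
    ext ⟨a, b, c⟩
    simp only [trip, tDist, Finset.filter_filter, Finset.mem_filter, Finset.mem_product,
      mem_univ, true_and, Finset.mem_map, Finset.mem_offDiag, mem_neighborFinset,
      Function.Embedding.coeFn_mk, Prod.mk.injEq]
    constructor
    · rintro ⟨⟨⟨h1, h2, h3⟩, hb, hc⟩, rfl⟩
      exact ⟨(b, c), ⟨hb, hc, h3⟩, rfl⟩
    · rintro ⟨⟨x, y⟩, ⟨hx, hy, hxy⟩, rfl, rfl, rfl⟩
      exact ⟨⟨⟨hx.ne, hy.ne, hxy⟩, hx, hy⟩, rfl⟩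
  rw [this, Finset.card_map, Finset.offDiag_card, card_neighborFinset_eq_degree]

lemma card_union3 {α : Type*} [DecidableEq α] (a b c : Finset α) :
    (a ∪ b ∪ c).card + (a ∩ b).card + (a ∩ c).card + (b ∩ c).card
      = a.card + b.card + c.card + (a ∩ b ∩ c).card := by
  have h1 := Finset.card_union_add_card_inter (a ∪ b) c
  have h2 := Finset.card_union_add_card_inter a b
  have h3 := Finset.card_union_add_card_inter (a ∩ c) (b ∩ c)
  have e1 : (a ∪ b) ∩ c = (a ∩ c) ∪ (b ∩ c) := Finset.union_inter_distrib_right a b c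
  have e2 : (a ∩ c) ∩ (b ∩ c) = a ∩ b ∩ c := by
    ext x; simp only [Finset.mem_inter]; tauto
  rw [e1] at h1
  rw [e2] at h3
  omega

lemma card_six (x y z : V) (hxy : x ≠ y) (hxz : x ≠ z) (hyz : y ≠ z) :
    ({(x,y,z),(x,z,y),(y,x,z),(y,z,x),(z,x,y),(z,y,x)} : Finset (V×V×V)).card = 6 := by
  rw [Finset.card_insert_of_notMem (by simp [Prod.ext_iff]; tauto),
    Finset.card_insert_of_notMem (by simp [Prod.ext_iff]; tauto),
    Finset.card_insert_of_notMem (by simp [Prod.ext_iff]; tauto),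
    Finset.card_insert_of_notMem (by simp [Prod.ext_iff]; tauto),
    Finset.card_insert_of_notMem (by simp [Prod.ext_iff]; tauto),
    Finset.card_singleton]

lemma six_mul_bad3 :
    (trip fun p => H.Adj p.1 p.2.1 ∨ H.Adj p.1 p.2.2 ∨ H.Adj p.2.1 p.2.2).card
      = 6 * (badFinset H 3).card := by
  rw [Finset.card_eq_sum_card_fiberwise
    (f := fun p : V×V×V => ({p.1, p.2.1, p.2.2} : Finset V)) (t := badFinset H 3) ?_]
  · rw [Finset.sum_congr rfl (g := fun _ => 6) ?_, Finset.sum_const, smul_eq_mul, mul_comm]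
    intro s hs
    simp only [badFinset, mem_filter, mem_powersetCard_univ] at hs
    obtain ⟨hcard, hbad⟩ := hs
    push_neg at hbad
    obtain ⟨u, hu, v, hv, huv⟩ := hbad
    obtain ⟨x, y, z, hxy, hxz, hyz, rfl⟩ := Finset.card_eq_three.1 hcard
    have hne : u ≠ v := fun h => H.irrefl (h ▸ huv)
    have hadj : H.Adj x y ∨ H.Adj x z ∨ H.Adj y z := by
      simp only [mem_insert, mem_singleton] at hu hv
      rcases hu with rfl | rfl | rfl <;> rcases hv with rfl | rfl | rfl <;>
        first
          | exact absurd rfl hne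
          | exact Or.inl huv
          | exact Or.inl huv.symm
          | exact Or.inr (Or.inl huv)
          | exact Or.inr (Or.inl huv.symm)
          | exact Or.inr (Or.inr huv)
          | exact Or.inr (Or.inr huv.symm)
    have hfib : (trip (fun p => H.Adj p.1 p.2.1 ∨ H.Adj p.1 p.2.2 ∨ H.Adj p.2.1 p.2.2)).filter
        (fun p => ({p.1, p.2.1, p.2.2} : Finset V) = {x, y, z})
        = {(x,y,z),(x,z,y),(y,x,z),(y,z,x),(z,x,y),(z,y,x)} := by
      ext ⟨a, b, c⟩
      simp only [trip, tDist, Finset.filter_filter, mem_filter, mem_product, mem_univ, true_and,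
        mem_insert, mem_singleton, Prod.mk.injEq]
      constructor
      · rintro ⟨⟨⟨h1, h2, h3⟩, -⟩, hset⟩
        have ha : a = x ∨ a = y ∨ a = z := by
          have : a ∈ ({x,y,z} : Finset V) := hset ▸ (by simp)
          simpa using this
        have hb : b = x ∨ b = y ∨ b = z := by
          have : b ∈ ({x,y,z} : Finset V) := hset ▸ (by simp)
          simpa using this
        have hc : c = x ∨ c = y ∨ c = z := by
          have : c ∈ ({x,y,z} : Finset V) := hset ▸ (by simp)
          simpa using this
        rcases ha with rfl|rfl|rfl <;> rcases hb with rfl|rfl|rfl <;>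
          rcases hc with rfl|rfl|rfl <;>
          first
            | exact absurd rfl h1
            | exact absurd rfl h2
            | exact absurd rfl h3
            | simp
      · have hset1 : ({x,z,y} : Finset V) = {x,y,z} := by ext w; simp; tauto
        have hset2 : ({y,x,z} : Finset V) = {x,y,z} := by ext w; simp; tauto
        have hset3 : ({y,z,x} : Finset V) = {x,y,z} := by ext w; simp; tauto
        have hset4 : ({z,x,y} : Finset V) = {x,y,z} := by ext w; simp; tauto
        have hset5 : ({z,y,x} : Finset V) = {x,y,z} := by ext w; simp; tauto
        rintro (⟨rfl,rfl,rfl⟩|⟨rfl,rfl,rfl⟩|⟨rfl,rfl,rfl⟩|⟨rfl,rfl,rfl⟩|⟨rfl,rfl,rfl⟩|⟨rfl,rfl,rfl⟩) <;>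
          refine ⟨⟨⟨?_, ?_, ?_⟩, ?_⟩, ?_⟩ <;>
          first
            | assumption
            | exact Ne.symm ‹_›
            | exact hset1 | exact hset2 | exact hset3 | exact hset4 | exact hset5 | rfl
            | (rcases hadj with h|h|h <;>
                first
                  | exact Or.inl h
                  | exact Or.inl h.symm
                  | exact Or.inr (Or.inl h)
                  | exact Or.inr (Or.inl h.symm)
                  | exact Or.inr (Or.inr h)
                  | exact Or.inr (Or.inr h.symm))
    rw [hfib, card_six x y z hxy hxz hyz]
  · rintro ⟨a, b, c⟩ hp
    simp only [Finset.mem_coe, trip, tDist, mem_filter] at hp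
    obtain ⟨-, ⟨h1, h2, h3⟩, hor⟩ := hp
    simp only [Finset.mem_coe, badFinset, mem_filter, mem_powersetCard_univ]
    constructor
    · exact Finset.card_eq_three.2 ⟨a, b, c, h1, h2, h3, rfl⟩
    · push_neg
      rcases hor with h|h|h
      · exact ⟨a, by simp, b, by simp, h⟩
      · exact ⟨a, by simp, c, by simp, h⟩
      · exact ⟨b, by simp, c, by simp, h⟩

lemma triple_identity :
    6 * (badFinset H 3).card + 3 * ∑ v, (H.degree v * H.degree v - H.degree v)
      = 3 * ((adjPairs H).card * (Fintype.card V - 2))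
        + (trip fun p => H.Adj p.1 p.2.1 ∧ H.Adj p.1 p.2.2 ∧ H.Adj p.2.1 p.2.2).card := by
  classical
  set A := trip fun p : V × V × V => H.Adj p.1 p.2.1 with hA
  set B := trip fun p : V × V × V => H.Adj p.1 p.2.2 with hB
  set C := trip fun p : V × V × V => H.Adj p.2.1 p.2.2 with hC
  have hu : A ∪ B ∪ C
      = trip fun p => H.Adj p.1 p.2.1 ∨ H.Adj p.1 p.2.2 ∨ H.Adj p.2.1 p.2.2 := by
    ext p
    simp only [hA, hB, hC, trip, Finset.mem_union, Finset.mem_filter]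
    tauto
  have hab : A ∩ B = trip fun p => H.Adj p.1 p.2.1 ∧ H.Adj p.1 p.2.2 := by
    ext p
    simp only [hA, hB, trip, Finset.mem_inter, Finset.mem_filter]
    tauto
  have hac : A ∩ C = trip fun p => H.Adj p.1 p.2.1 ∧ H.Adj p.2.1 p.2.2 := by
    ext p
    simp only [hA, hC, trip, Finset.mem_inter, Finset.mem_filter]
    tauto
  have hbc : B ∩ C = trip fun p => H.Adj p.1 p.2.2 ∧ H.Adj p.2.1 p.2.2 := by
    ext p
    simp only [hB, hC, trip, Finset.mem_inter, Finset.mem_filter]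
    tauto
  have habc : A ∩ B ∩ C
      = trip fun p => H.Adj p.1 p.2.1 ∧ H.Adj p.1 p.2.2 ∧ H.Adj p.2.1 p.2.2 := by
    ext p
    simp only [hA, hB, hC, trip, Finset.mem_inter, Finset.mem_filter]
    tauto
  have key := card_union3 A B C
  rw [habc, hab, hac, hbc, hu, six_mul_bad3 H] at key
  have cA : A.card = (adjPairs H).card * (Fintype.card V - 2) := cardD1 H
  have cB : B.card = (adjPairs H).card * (Fintype.card V - 2) := by
    rw [hB, ← cardD1 H]
    exact trip_card_comp
      ⟨fun p => (p.1, p.2.2, p.2.1), fun p => (p.1, p.2.2, p.2.1),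
        fun p => rfl, fun p => rfl⟩
      (fun p => ⟨fun ⟨a, b, c⟩ => ⟨b, a, Ne.symm c⟩, fun ⟨a, b, c⟩ => ⟨b, a, Ne.symm c⟩⟩)
      _ _ (fun p => Iff.rfl)
  have cC : C.card = (adjPairs H).card * (Fintype.card V - 2) := by
    rw [hC, ← cardD1 H]
    exact trip_card_comp
      ⟨fun p => (p.2.1, p.2.2, p.1), fun p => (p.2.2, p.1, p.2.1),
        fun p => rfl, fun p => rfl⟩
      (fun p => ⟨fun ⟨a, b, c⟩ => ⟨Ne.symm b, Ne.symm c, a⟩,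
        fun ⟨a, b, c⟩ => ⟨c, Ne.symm a, Ne.symm b⟩⟩)
      _ _ (fun p => Iff.rfl)
  have cAB : (trip fun p : V × V × V =>
      H.Adj p.1 p.2.1 ∧ H.Adj p.1 p.2.2).card
      = ∑ v, (H.degree v * H.degree v - H.degree v) := cardA1 H
  have cAC : (trip fun p : V × V × V =>
      H.Adj p.1 p.2.1 ∧ H.Adj p.2.1 p.2.2).card
      = ∑ v, (H.degree v * H.degree v - H.degree v) := by
    rw [← cardA1 H]
    exact trip_card_comp
      ⟨fun p => (p.2.1, p.1, p.2.2), fun p => (p.2.1, p.1, p.2.2),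
        fun p => rfl, fun p => rfl⟩
      (fun p => ⟨fun ⟨a, b, c⟩ => ⟨Ne.symm a, c, b⟩, fun ⟨a, b, c⟩ => ⟨Ne.symm a, c, b⟩⟩)
      _ _ (fun p => by rw [H.adj_comm p.1 p.2.1]; exact Iff.rfl)
  have cBC : (trip fun p : V × V × V =>
      H.Adj p.1 p.2.2 ∧ H.Adj p.2.1 p.2.2).card
      = ∑ v, (H.degree v * H.degree v - H.degree v) := by
    rw [← cardA1 H]
    exact trip_card_comp
      ⟨fun p => (p.2.2, p.1, p.2.1), fun p => (p.2.1, p.2.2, p.1),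
        fun p => rfl, fun p => rfl⟩
      (fun p => ⟨fun ⟨a, b, c⟩ => ⟨c, Ne.symm a, Ne.symm b⟩,
        fun ⟨a, b, c⟩ => ⟨Ne.symm b, Ne.symm c, a⟩⟩)
      _ _ (fun p => by rw [H.adj_comm p.1 p.2.2, H.adj_comm p.2.1 p.2.2]; exact Iff.rfl)
  omega

lemma exists_parent (hconn : H.Connected) {r v : V} (hv : v ≠ r) :
    ∃ u, H.Adj v u ∧ H.dist u r < H.dist v r := by
  obtain ⟨p, hp⟩ := (hconn v r).exists_walk_length_eq_dist
  have hpos : 0 < H.dist v r := hconn.pos_dist_of_ne hv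
  cases p with
  | nil => exact absurd rfl hv
  | cons hadj q =>
    refine ⟨_, hadj, ?_⟩
    have := H.dist_le q
    simp only [Walk.length_cons] at hp
    omega

lemma pair_mem_badFinset {a b : V} (hab : H.Adj a b) : ({a, b} : Finset V) ∈ badFinset H 2 := by
  simp only [badFinset, mem_filter, mem_powersetCard_univ]
  refine ⟨Finset.card_pair hab.ne, ?_⟩
  push_neg
  exact ⟨a, by simp, b, by simp, hab⟩

lemma no_triangle (hconn : H.Connected) (hcard : (badFinset H 2).card + 1 = Fintype.card V)
    {a b c : V} (hab : H.Adj a b) (hac : H.Adj a c) (hbc : H.Adj b c) : False := by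
  classical
  have hpar : ∀ v : V, v ≠ a → ∃ u, H.Adj v u ∧ H.dist u a < H.dist v a :=
    fun v hv => exists_parent H hconn hv
  set f : V → Finset V := fun v =>
    if h : v ≠ a then {v, (hpar v h).choose} else ∅ with hf
  have hspec : ∀ v (h : v ≠ a), H.Adj v ((hpar v h).choose)
      ∧ H.dist ((hpar v h).choose) a < H.dist v a := fun v h => (hpar v h).choose_spec
  have hdist1 : H.dist b a = 1 := by
    have h1 : H.dist b a ≤ 1 := by
      have := H.dist_le (hab.symm.toWalk)
      simpa using this
    have h2 : 0 < H.dist b a := hconn.pos_dist_of_ne hab.ne'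
    omega
  have hdist2 : H.dist c a = 1 := by
    have h1 : H.dist c a ≤ 1 := by
      have := H.dist_le (hac.symm.toWalk)
      simpa using this
    have h2 : 0 < H.dist c a := hconn.pos_dist_of_ne hac.ne'
    omega
  have hmaps : ∀ v ∈ univ.erase a, f v ∈ (badFinset H 2).erase ({b, c} : Finset V) := by
    intro v hv
    rw [Finset.mem_erase] at hv
    obtain ⟨hva, -⟩ := hv
    rw [hf]
    simp only [dif_pos hva]
    rw [Finset.mem_erase]
    obtain ⟨hadj, hlt⟩ := hspec v hva
    refine ⟨?_, pair_mem_badFinset H hadj⟩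
    intro heq
    rcases (finset_pair_eq_pair_iff hadj.ne).1 heq with ⟨rfl, heq2⟩ | ⟨rfl, heq2⟩
    · rw [heq2, hdist1, hdist2] at hlt; omega
    · rw [heq2, hdist2, hdist1] at hlt; omega
  have hinj : Set.InjOn f (univ.erase a) := by
    intro v hv w hw hvw
    rw [Finset.coe_erase, Set.mem_diff] at hv hw
    have hva : v ≠ a := by simpa using hv.2
    have hwa : w ≠ a := by simpa using hw.2
    by_contra hne
    rw [hf] at hvw
    simp only [dif_pos hva, dif_pos hwa] at hvw
    obtain ⟨hadjv, hltv⟩ := hspec v hva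
    obtain ⟨hadjw, hltw⟩ := hspec w hwa
    rcases (finset_pair_eq_pair_iff hadjv.ne).1 hvw with ⟨rfl, heq⟩ | ⟨h1, h2⟩
    · exact hne rfl
    · have e1 : H.dist v a = H.dist ((hpar w hwa).choose) a := by rw [h1]
      have e2 : H.dist w a = H.dist ((hpar v hva).choose) a := by rw [h2]
      omega
  have hle := Finset.card_le_card_of_injOn f hmaps hinj
  rw [Finset.card_erase_of_mem (by simp), Finset.card_erase_of_mem (pair_mem_badFinset H hbc),
    Finset.card_univ] at hle
  have hpos : 0 < (badFinset H 2).card := Finset.card_pos.2 ⟨_, pair_mem_badFinset H hbc⟩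
  omega

end Aux

section PathSide
variable {n : ℕ} [DecidableRel (SimpleGraph.pathGraph n).Adj]

lemma fin_filter_val_card (P : ℕ → Prop) [DecidablePred P] (n : ℕ) :
    ((univ : Finset (Fin n)).filter (fun v => P v.val)).card
      = ((Finset.range n).filter P).card := by
  apply Finset.card_nbij (i := Fin.val)
  · intro v hv
    simp only [Finset.mem_coe, mem_filter, mem_univ, true_and] at hv
    simp [v.isLt, hv]
  · intro v _ w _ h
    exact Fin.ext h
  · intro k hk
    simp only [Finset.coe_filter, Set.mem_setOf_eq, mem_range] at hk
    exact ⟨⟨k, hk.1⟩, by simp [hk.2], rfl⟩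

lemma pathGraph_degree (hn : 1 ≤ n) (v : Fin n) :
    (SimpleGraph.pathGraph n).degree v
      = (if 0 < v.val then 1 else 0) + (if v.val + 1 < n then 1 else 0) := by
  classical
  rw [← card_neighborFinset_eq_degree]
  have hnb : (SimpleGraph.pathGraph n).neighborFinset v
      = (univ.filter fun u : Fin n => u.val + 1 = v.val)
        ∪ (univ.filter fun u : Fin n => v.val + 1 = u.val) := by
    ext u
    simp only [mem_neighborFinset, pathGraph_adj, Finset.mem_union, mem_filter, mem_univ,
      true_and]
    tauto
  rw [hnb, Finset.card_union_of_disjoint]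
  · congr 1
    · rcases Nat.eq_zero_or_pos v.val with hv | hv
      · rw [hv, if_neg (lt_irrefl 0)]
        rw [Finset.card_eq_zero, Finset.filter_eq_empty_iff]
        intro u _
        omega
      · rw [if_pos hv]
        rw [show (univ.filter fun u : Fin n => u.val + 1 = v.val)
            = {(⟨v.val - 1, by omega⟩ : Fin n)} from ?_, Finset.card_singleton]
        ext u
        simp only [mem_filter, mem_univ, true_and, Finset.mem_singleton, Fin.ext_iff]
        omega
    · by_cases hv : v.val + 1 < n
      · rw [if_pos hv]
        rw [show (univ.filter fun u : Fin n => v.val + 1 = u.val)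
            = {(⟨v.val + 1, hv⟩ : Fin n)} from ?_, Finset.card_singleton]
        ext u
        simp only [mem_filter, mem_univ, true_and, Finset.mem_singleton, Fin.ext_iff]
        omega
      · rw [if_neg hv]
        rw [Finset.card_eq_zero, Finset.filter_eq_empty_iff]
        intro u _
        have := u.isLt
        omega
  · rw [Finset.disjoint_filter]
    intro u _ h1 h2
    omega

lemma pathGraph_sum_degree (hn : 1 ≤ n) :
    ∑ v : Fin n, (SimpleGraph.pathGraph n).degree v = 2 * (n - 1) := by
  classical
  rw [Finset.sum_congr rfl (fun v _ => pathGraph_degree hn v), Finset.sum_add_distrib]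
  have h1 : ∑ v : Fin n, (if 0 < v.val then 1 else 0) = n - 1 := by
    rw [Finset.sum_ite, Finset.sum_const, Finset.sum_const]
    simp only [smul_eq_mul, mul_one, mul_zero, add_zero]
    rw [fin_filter_val_card (fun k => 0 < k) n]
    rw [show (Finset.range n).filter (fun k => 0 < k) = Finset.Ico 1 n from by
      ext k; simp; omega]
    simp
  have h2 : ∑ v : Fin n, (if v.val + 1 < n then 1 else 0) = n - 1 := by
    rw [Finset.sum_ite, Finset.sum_const, Finset.sum_const]
    simp only [smul_eq_mul, mul_one, mul_zero, add_zero]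
    rw [fin_filter_val_card (fun k => k + 1 < n) n]
    rw [show (Finset.range n).filter (fun k => k + 1 < n) = Finset.Ico 0 (n - 1) from by
      ext k; simp; omega]
    simp
  rw [h1, h2]
  omega

lemma pathGraph_sum_cherry (hn : 1 ≤ n) :
    ∑ v : Fin n, ((SimpleGraph.pathGraph n).degree v * (SimpleGraph.pathGraph n).degree v
      - (SimpleGraph.pathGraph n).degree v) = 2 * (n - 2) := by
  classical
  have hpt : ∀ v : Fin n, (SimpleGraph.pathGraph n).degree v * (SimpleGraph.pathGraph n).degree v
      - (SimpleGraph.pathGraph n).degree v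
      = (if 0 < v.val ∧ v.val + 1 < n then 2 else 0) := by
    intro v
    rw [pathGraph_degree hn v]
    by_cases h1 : 0 < v.val <;> by_cases h2 : v.val + 1 < n <;> simp [h1, h2]
  rw [Finset.sum_congr rfl (fun v _ => hpt v)]
  rw [Finset.sum_ite, Finset.sum_const, Finset.sum_const]
  simp only [smul_eq_mul, mul_zero, add_zero]
  rw [fin_filter_val_card (fun k => 0 < k ∧ k + 1 < n) n]
  rw [show (Finset.range n).filter (fun k => 0 < k ∧ k + 1 < n) = Finset.Ico 1 (n - 1) from by
    ext k; simp; omega]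
  rw [Nat.card_Ico]
  omega

lemma pathGraph_triangle_free {a b c : Fin n} (hab : (SimpleGraph.pathGraph n).Adj a b)
    (hac : (SimpleGraph.pathGraph n).Adj a c) (hbc : (SimpleGraph.pathGraph n).Adj b c) :
    False := by
  rw [pathGraph_adj] at hab hac hbc
  omega

end PathSide


section Ham
variable {V : Type*} {G : SimpleGraph V}

lemma isPath_getVert_inj {u v : V} {p : G.Walk u v} (hp : p.IsPath) :
    ∀ {i j : ℕ}, i ≤ p.length → j ≤ p.length → p.getVert i = p.getVert j → i = j := by
  induction p with
  | nil => intro i j hi hj _; simp at hi hj; omega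
  | @cons a b c h q ih =>
    rw [SimpleGraph.Walk.cons_isPath_iff] at hp
    intro i j hi hj hij
    match i, j with
    | 0, 0 => rfl
    | 0, (k+1) =>
      exfalso
      apply hp.2
      rw [SimpleGraph.Walk.mem_support_iff_exists_getVert]
      refine ⟨k, ?_, ?_⟩
      · rw [← SimpleGraph.Walk.getVert_cons_succ q h, ← hij]; rfl
      · simpa [Nat.succ_le_succ_iff] using hj
    | (k+1), 0 =>
      exfalso
      apply hp.2
      rw [SimpleGraph.Walk.mem_support_iff_exists_getVert]
      refine ⟨k, ?_, ?_⟩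
      · rw [← SimpleGraph.Walk.getVert_cons_succ q h, hij]; rfl
      · simpa [Nat.succ_le_succ_iff] using hi
    | (k+1), (l+1) =>
      have := ih hp.1 (by simpa [Nat.succ_le_succ_iff] using hi)
        (by simpa [Nat.succ_le_succ_iff] using hj) hij
      omega

lemma edge_index {u v : V} {p : G.Walk u v} {e : Sym2 V} (he : e ∈ p.edges) :
    ∃ i, i < p.length ∧ e = s(p.getVert i, p.getVert (i + 1)) := by
  induction p with
  | nil => simp [SimpleGraph.Walk.edges_nil] at he
  | @cons a b c h q ih =>
    rw [SimpleGraph.Walk.edges_cons, List.mem_cons] at he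
    rcases he with rfl | he
    · refine ⟨0, by simp, ?_⟩
      rw [SimpleGraph.Walk.getVert_zero]
      norm_num
    · obtain ⟨i, hi, hie⟩ := ih he
      exact ⟨i + 1, by simpa [Nat.succ_lt_succ_iff] using hi, by
        rwa [SimpleGraph.Walk.getVert_cons_succ, SimpleGraph.Walk.getVert_cons_succ]⟩

lemma exists_crossing {S : Set V} {x a : V} (w : G.Walk x a) (hx : x ∉ S) (ha : a ∈ S) :
    ∃ u v, G.Adj u v ∧ u ∉ S ∧ v ∈ S := by
  induction w with
  | nil => exact absurd ha hx
  | @cons p q r h w ih =>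
    by_cases hq : q ∈ S
    · exact ⟨p, q, h, hx, hq⟩
    · exact ih hq ha

end Ham

section HamIso
variable {V : Type*} [Fintype V] [DecidableEq V]

lemma ham_iso (G : SimpleGraph V) [DecidableRel G.Adj]
    (n : ℕ) (hn : 2 ≤ n) (hconn : G.Connected) (hcard : Fintype.card V = n)
    (hdeg : ∀ v, G.degree v ≤ 2) (hedges : G.edgeFinset.card = n - 1) :
    Nonempty (G ≃g SimpleGraph.pathGraph n) := by
  classical
  set Q : ℕ → Prop := fun l => ∃ (a b : V) (p : G.Walk a b), p.IsPath ∧ p.length = l with hQdef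
  have hNV : Nonempty V := by
    rw [← Fintype.card_pos_iff]
    omega
  obtain ⟨v0⟩ := hNV
  have hQ0 : Q 0 := ⟨v0, v0, SimpleGraph.Walk.nil, SimpleGraph.Walk.IsPath.nil, rfl⟩
  have hbound : ∀ l, Q l → l ≤ n - 1 := by
    rintro l ⟨a, b, p, hp, rfl⟩
    have := hp.length_lt
    omega
  set ℓ := Nat.findGreatest Q (n - 1) with hldef
  have hQl : Q ℓ := Nat.findGreatest_spec (m := 0) (by omega) hQ0
  have hmax : ∀ l, Q l → l ≤ ℓ := fun l hl => Nat.le_findGreatest (hbound l hl) hl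
  obtain ⟨a, b, p, hp, hlen⟩ := hQl
  -- the maximal path spans all vertices
  have hsupp : ∀ x : V, x ∈ p.support := by
    by_contra hx
    push_neg at hx
    obtain ⟨x, hxs⟩ := hx
    obtain ⟨u, v, hadj, hu, hv⟩ := exists_crossing (S := {y | y ∈ p.support})
      ((hconn x a).some) hxs (p.start_mem_support)
    simp only [Set.mem_setOf_eq] at hu hv
    by_cases hva : v = a
    · subst hva
      have hQ1 : Q (ℓ + 1) := ⟨u, b, SimpleGraph.Walk.cons hadj p, by
        rw [SimpleGraph.Walk.cons_isPath_iff]; exact ⟨hp, hu⟩, by simp [hlen]⟩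
      have := hmax _ hQ1
      omega
    by_cases hvb : v = b
    · subst hvb
      have hups : u ∉ p.reverse.support := by
        rwa [SimpleGraph.Walk.support_reverse, List.mem_reverse]
      have hQ1 : Q (ℓ + 1) := ⟨u, a, SimpleGraph.Walk.cons hadj p.reverse, by
        rw [SimpleGraph.Walk.cons_isPath_iff]
        exact ⟨hp.reverse, hups⟩, by simp [hlen]⟩
      have := hmax _ hQ1
      omega
    -- interior vertex
    obtain ⟨i, hgv, hile⟩ := SimpleGraph.Walk.mem_support_iff_exists_getVert.1 hv
    have hi0 : i ≠ 0 := by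
      intro h
      rw [h, SimpleGraph.Walk.getVert_zero] at hgv
      exact hva hgv.symm
    have hiL : i ≠ p.length := by
      intro h
      rw [h, SimpleGraph.Walk.getVert_length] at hgv
      exact hvb hgv.symm
    set n1 := p.getVert (i - 1) with hn1
    set n2 := p.getVert (i + 1) with hn2
    have hadj1 : G.Adj v n1 := by
      have := p.adj_getVert_succ (i := i - 1) (by omega)
      rw [show i - 1 + 1 = i from by omega, hgv] at this
      exact this.symm
    have hadj2 : G.Adj v n2 := by
      have := p.adj_getVert_succ (i := i) (by omega)
      rw [hgv] at this
      exact this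
    have h12 : n1 ≠ n2 := by
      intro hne
      have := isPath_getVert_inj hp (i := i - 1) (j := i + 1) (by omega) (by omega) hne
      omega
    have hun1 : u ≠ n1 := by
      intro hne
      apply hu
      rw [hne, hn1, SimpleGraph.Walk.mem_support_iff_exists_getVert]
      exact ⟨i - 1, rfl, by omega⟩
    have hun2 : u ≠ n2 := by
      intro hne
      apply hu
      rw [hne, hn2, SimpleGraph.Walk.mem_support_iff_exists_getVert]
      exact ⟨i + 1, rfl, by omega⟩
    have hsub : ({u, n1, n2} : Finset V) ⊆ G.neighborFinset v := by
      intro w hw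
      rw [SimpleGraph.mem_neighborFinset]
      simp only [Finset.mem_insert, Finset.mem_singleton] at hw
      rcases hw with rfl | rfl | rfl
      · exact hadj.symm
      · exact hadj1
      · exact hadj2
    have hcard3 : ({u, n1, n2} : Finset V).card = 3 :=
      Finset.card_eq_three.2 ⟨u, n1, n2, hun1, hun2, h12, rfl⟩
    have := Finset.card_le_card hsub
    rw [hcard3, SimpleGraph.card_neighborFinset_eq_degree] at this
    have := hdeg v
    omega
  -- lengths
  have hnodup := hp.support_nodup
  have hlsupp : p.support.length = ℓ + 1 := by
    rw [SimpleGraph.Walk.length_support, hlen]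
  have hcover : n ≤ ℓ + 1 := by
    have hss : (univ : Finset V) ⊆ p.support.toFinset := fun x _ =>
      List.mem_toFinset.2 (hsupp x)
    have hc := Finset.card_le_card hss
    rwa [Finset.card_univ, hcard, List.toFinset_card_of_nodup hnodup, hlsupp] at hc
  have hlb : ℓ ≤ n - 1 := Nat.findGreatest_le _
  have hleq : ℓ = n - 1 := by omega
  -- edge sets coincide
  have hedgesnodup := hp.isTrail.edges_nodup
  have hsubE : p.edges.toFinset ⊆ G.edgeFinset := by
    intro e he
    rw [List.mem_toFinset] at he
    rw [SimpleGraph.mem_edgeFinset]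
    exact p.edges_subset_edgeSet he
  have hE : p.edges.toFinset = G.edgeFinset :=
    Finset.eq_of_subset_of_card_le hsubE (by
      rw [List.toFinset_card_of_nodup hedgesnodup, SimpleGraph.Walk.length_edges, hlen, hleq,
        hedges])
  -- the bijection
  have hinj : Function.Injective (fun i : Fin n => p.getVert i.val) := by
    intro i j hij
    exact Fin.ext (isPath_getVert_inj hp
      (by omega : i.val ≤ p.length) (by omega : j.val ≤ p.length) hij)
  have hbij : Function.Bijective (fun i : Fin n => p.getVert i.val) :=
    (Fintype.bijective_iff_injective_and_card _).2 ⟨hinj, by simp [hcard]⟩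
  refine ⟨(SimpleGraph.Iso.symm ⟨Equiv.ofBijective _ hbij, ?_⟩)⟩
  intro i j
  show G.Adj (p.getVert i.val) (p.getVert j.val) ↔ (SimpleGraph.pathGraph n).Adj i j
  constructor
  · intro hadj
    have hmem : s(p.getVert i.val, p.getVert j.val) ∈ p.edges := by
      rw [← List.mem_toFinset, hE, SimpleGraph.mem_edgeFinset]
      exact hadj
    obtain ⟨k, hk, hke⟩ := edge_index hmem
    rw [Sym2.eq_iff] at hke
    rw [SimpleGraph.pathGraph_adj]
    rcases hke with ⟨h1, h2⟩ | ⟨h1, h2⟩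
    · left
      have e1 : i.val = k := isPath_getVert_inj hp (by omega) (by omega) h1
      have e2 : j.val = k + 1 := isPath_getVert_inj hp (by omega) (by omega) h2
      omega
    · right
      have e1 : i.val = k + 1 := isPath_getVert_inj hp (by omega) (by omega) h1
      have e2 : j.val = k := isPath_getVert_inj hp (by omega) (by omega) h2
      omega
  · intro hij
    rw [SimpleGraph.pathGraph_adj] at hij
    rcases hij with hij | hij
    · have := p.adj_getVert_succ (i := i.val) (by omega)
      rwa [show i.val + 1 = j.val from hij] at this
    · have := p.adj_getVert_succ (i := j.val) (by omega)
      rw [show j.val + 1 = i.val from hij] at this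
      exact this.symm

end HamIso


theorem connected_indepEquiv_path {V : Type*} [Fintype V] (G : SimpleGraph V) (n : ℕ)
    (hn : 1 ≤ n) (hconn : G.Connected)
    (h : ∀ k, indepCount G k = indepCount (SimpleGraph.pathGraph n) k) :
    Nonempty (G ≃g SimpleGraph.pathGraph n) := by
  classical
  have hcV : Fintype.card V = n := by
    have h1 := h 1
    rw [indepCount_one, indepCount_one] at h1
    simpa using h1
  rcases eq_or_lt_of_le hn with h1 | h2
  · -- n = 1
    subst h1
    have hsub : Subsingleton V := by
      rw [← Fintype.card_le_one_iff_subsingleton, hcV]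
    refine ⟨⟨Fintype.equivFinOfCardEq hcV, ?_⟩⟩
    intro a b
    haveI hfs : Subsingleton (Fin 1) := ⟨fun a b => by omega⟩
    constructor
    · intro had
      exact absurd (Subsingleton.elim _ _ :
        (Fintype.equivFinOfCardEq hcV a) = Fintype.equivFinOfCardEq hcV b) had.ne
    · intro had
      exact absurd (Subsingleton.elim _ _ : a = b) had.ne
  · -- n ≥ 2
    have hn2 : 2 ≤ n := h2
    set P := SimpleGraph.pathGraph n with hP
    have hbad : ∀ k, (badFinset G k).card = (badFinset P k).card := by
      intro k
      have e2 := indep_add_bad G k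
      have e3 := indep_add_bad P k
      have e4 := h k
      rw [indepCount_eq_card, indepCount_eq_card] at e4
      rw [hcV] at e2
      rw [Fintype.card_fin] at e3
      omega
    have hsumP : ∑ v : Fin n, P.degree v = 2 * (n - 1) := pathGraph_sum_degree hn
    have hsumG : ∑ v, G.degree v = 2 * (n - 1) := by
      have e1 := adjPairs_card G
      have e2 := two_mul_bad2 G
      have e3 := adjPairs_card P
      have e4 := two_mul_bad2 P
      have e5 := hbad 2
      omega
    have hbad2G : (badFinset G 2).card = n - 1 := by
      have e1 := adjPairs_card G
      have e2 := two_mul_bad2 G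
      omega
    have hX3G : (trip fun p : V × V × V =>
        G.Adj p.1 p.2.1 ∧ G.Adj p.1 p.2.2 ∧ G.Adj p.2.1 p.2.2).card = 0 := by
      rw [Finset.card_eq_zero, trip, Finset.filter_eq_empty_iff]
      rintro p -
      rintro ⟨-, h1, h2, h3⟩
      exact no_triangle G hconn (by omega) h1 h2 h3
    have hX3P : (trip fun p : Fin n × Fin n × Fin n =>
        P.Adj p.1 p.2.1 ∧ P.Adj p.1 p.2.2 ∧ P.Adj p.2.1 p.2.2).card = 0 := by
      rw [Finset.card_eq_zero, trip, Finset.filter_eq_empty_iff]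
      rintro p -
      rintro ⟨-, h1, h2, h3⟩
      exact pathGraph_triangle_free h1 h2 h3
    have hTG := triple_identity G
    have hTP := triple_identity P
    have eA : (adjPairs G).card = (adjPairs P).card := by
      have e1 := adjPairs_card G
      have e3 := adjPairs_card P
      omega
    rw [hX3G, hcV, eA] at hTG
    rw [hX3P, Fintype.card_fin] at hTP
    have hcherryP : ∑ v : Fin n, (P.degree v * P.degree v - P.degree v) = 2 * (n - 2) :=
      pathGraph_sum_cherry hn
    have hbad3 := hbad 3
    have hcherryG : ∑ v, (G.degree v * G.degree v - G.degree v) = 2 * (n - 2) := by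
      omega
    -- all degrees are positive
    have hdegpos : ∀ v, 1 ≤ G.degree v := by
      intro v
      obtain ⟨w, hw⟩ := Fintype.exists_ne_of_one_lt_card (by omega) v
      have hr := (hconn v w).some
      cases hr with
      | nil => exact absurd rfl hw
      | cons hadj q =>
        rw [Nat.one_le_iff_ne_zero, ← Nat.pos_iff_ne_zero, G.degree_pos_iff_exists_adj]
        exact ⟨_, hadj⟩
    have hsum1 : ∑ v, (G.degree v - 1) = n - 2 := by
      have e : ∑ v, G.degree v = ∑ v, ((G.degree v - 1) + 1) :=
        Finset.sum_congr rfl fun v _ => by have := hdegpos v; omega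
      rw [Finset.sum_add_distrib, Finset.sum_const, Finset.card_univ, hcV, smul_eq_mul,
        mul_one] at e
      omega
    have hpt : ∀ v ∈ (univ : Finset V),
        2 * (G.degree v - 1) ≤ G.degree v * G.degree v - G.degree v := by
      intro v _
      have hd := hdegpos v
      have hmul : G.degree v * G.degree v - G.degree v * 1
          = G.degree v * (G.degree v - 1) := (Nat.mul_sub _ _ _).symm
      rcases Nat.lt_or_ge (G.degree v) 2 with hd2 | hd2
      · have : G.degree v = 1 := by omega
        rw [this]
      · have h22 : 2 * (G.degree v - 1) ≤ G.degree v * (G.degree v - 1) :=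
          Nat.mul_le_mul_right _ hd2
        omega
    have hdeg2 : ∀ v, G.degree v ≤ 2 := by
      intro v
      have hsle := Finset.sum_le_sum hpt
      rw [← Finset.mul_sum, hsum1, hcherryG] at hsle
      have heq : ∀ w ∈ (univ : Finset V),
          2 * (G.degree w - 1) = G.degree w * G.degree w - G.degree w := by
        apply (Finset.sum_eq_sum_iff_of_le hpt).1
        rw [← Finset.mul_sum, hsum1, hcherryG]
      have hv := heq v (Finset.mem_univ v)
      by_contra hd3
      push_neg at hd3
      have h3 : 3 ≤ G.degree v := hd3
      have hmul : G.degree v * G.degree v - G.degree v * 1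
          = G.degree v * (G.degree v - 1) := (Nat.mul_sub _ _ _).symm
      have h33 : 3 * (G.degree v - 1) ≤ G.degree v * (G.degree v - 1) :=
        Nat.mul_le_mul_right _ h3
      omega
    have hedges : G.edgeFinset.card = n - 1 := by
      have := G.sum_degrees_eq_twice_card_edges
      omega
    exact ham_iso G n hn2 hconn hcV hdeg2 hedges
end

section
/- For every n ≥ 2, the path P_{2n} on 2n vertices is independence equivalent to the disjoint union of the path P_{n−1} on n−1 vertices and the cycle C_{n+1} on n+1 vertices; that is, for every k, the number of independent sets of size k in P_{2n} equals the number of independent sets of size k in P_{n−1} ∪ C_{n+1}. -/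
open SimpleGraph Polynomial Finset

open scoped Classical in
noncomputable def indepPoly {V : Type*} [Fintype V] (G : SimpleGraph V) : Polynomial ℕ :=
  ∑ s ∈ Finset.univ.filter (fun s : Finset V => ∀ u ∈ s, ∀ v ∈ s, ¬ G.Adj u v),
    (Polynomial.X : Polynomial ℕ) ^ s.card

lemma indepPoly_coeff {V : Type*} [Fintype V] (G : SimpleGraph V) (k : ℕ) :
    (indepPoly G).coeff k = indepCount G k := by
  classical
  rw [indepCount, Nat.card_eq_fintype_card, Fintype.card_subtype]
  rw [indepPoly, finset_sum_coeff]
  simp only [coeff_X_pow]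
  rw [Finset.sum_boole, Finset.filter_filter]
  norm_cast
  congr 1
  apply Finset.filter_congr
  intro s _
  tauto

lemma fin_sub_val {n : ℕ} (a b : Fin n) :
    (a - b).val = if b.val ≤ a.val then a.val - b.val else a.val + n - b.val := by
  have hb := b.isLt; have ha := a.isLt
  rw [Fin.sub_def]
  simp only []
  split
  · next h =>
    have he : n - b.val + a.val = (a.val - b.val) + n := by omega
    rw [he, Nat.add_mod_right, Nat.mod_eq_of_lt (by omega)]
  · next h =>
    rw [Nat.mod_eq_of_lt (by omega)]
    omega

lemma indepPoly_split {V W₁ W₂ : Type*} [Fintype V] [Fintype W₁] [Fintype W₂]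
    (G : SimpleGraph V) (H₁ : SimpleGraph W₁) (H₂ : SimpleGraph W₂)
    (a : V) (f₁ : W₁ ↪ V) (f₂ : W₂ ↪ V)
    (hadj₁ : ∀ u v, H₁.Adj u v ↔ G.Adj (f₁ u) (f₁ v))
    (hadj₂ : ∀ u v, H₂.Adj u v ↔ G.Adj (f₂ u) (f₂ v))
    (hr₁ : ∀ x : V, x ≠ a ↔ ∃ y, f₁ y = x)
    (ha₂ : ∀ w, ¬ G.Adj a (f₂ w))
    (hna₂ : ∀ y : W₂, f₂ y ≠ a)
    (hr₂ : ∀ x : V, x ≠ a → ¬ G.Adj a x → ∃ y, f₂ y = x) :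
    indepPoly G = indepPoly H₁ + X * indepPoly H₂ := by
  classical
  have hna₁ : ∀ y : W₁, f₁ y ≠ a := by
    intro y h
    exact absurd rfl ((hr₁ a).mpr ⟨y, h⟩)
  rw [indepPoly, ← Finset.sum_filter_add_sum_filter_not
      (Finset.univ.filter (fun s : Finset V => ∀ u ∈ s, ∀ v ∈ s, ¬ G.Adj u v))
      (fun s => a ∈ s)]
  have h₂ : ∑ s ∈ (Finset.univ.filter
        (fun s : Finset V => ∀ u ∈ s, ∀ v ∈ s, ¬ G.Adj u v)).filter (fun s => a ∈ s),
      (X : Polynomial ℕ) ^ s.card = X * indepPoly H₂ := by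
    unfold indepPoly
    rw [Finset.mul_sum]
    refine (Finset.sum_bij' (fun s _ => (s.erase a).preimage f₂ f₂.injective.injOn)
      (fun t _ => insert a (t.map f₂)) ?_ ?_ ?_ ?_ ?_).symm.symm
    · intro s hs
      simp only [Finset.mem_filter, Finset.mem_univ, true_and] at hs ⊢
      intro u hu v hv hadj
      rw [Finset.mem_preimage, Finset.mem_erase] at hu hv
      exact hs.1 _ hu.2 _ hv.2 ((hadj₂ u v).mp hadj)
    · intro t ht
      simp only [Finset.mem_filter, Finset.mem_univ, true_and] at ht ⊢
      have hat : a ∉ t.map f₂ := by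
        simp only [Finset.mem_map, not_exists]
        rintro y ⟨-, h⟩
        exact hna₂ y h
      refine ⟨?_, Finset.mem_insert_self _ _⟩
      intro u hu v hv hadj
      rcases Finset.mem_insert.mp hu with rfl | hu' <;>
        rcases Finset.mem_insert.mp hv with h | hv'
      · exact G.irrefl (h ▸ hadj)
      · obtain ⟨w, -, rfl⟩ := Finset.mem_map.mp hv'
        exact ha₂ w hadj
      · obtain ⟨w, -, rfl⟩ := Finset.mem_map.mp hu'
        exact ha₂ w (G.adj_symm (h ▸ hadj))
      · obtain ⟨w, hw, rfl⟩ := Finset.mem_map.mp hu'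
        obtain ⟨w', hw', h'⟩ := Finset.mem_map.mp hv'
        subst h'
        exact ht _ hw _ hw' ((hadj₂ w w').mpr hadj)
    · intro s hs
      simp only [Finset.mem_filter, Finset.mem_univ, true_and] at hs
      have hsub : ((s.erase a).preimage f₂ f₂.injective.injOn).map f₂ = s.erase a := by
        ext x
        simp only [Finset.mem_map, Finset.mem_preimage]
        constructor
        · rintro ⟨y, hy, rfl⟩; exact hy
        · intro hx
          obtain ⟨y, rfl⟩ := hr₂ x (Finset.ne_of_mem_erase hx)
            (hs.1 _ hs.2 _ (Finset.mem_of_mem_erase hx))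
          exact ⟨y, hx, rfl⟩
      show insert a (Finset.map f₂ ((s.erase a).preimage f₂ f₂.injective.injOn)) = s
      rw [hsub, Finset.insert_erase hs.2]
    · intro t ht
      have hat : a ∉ t.map f₂ := by
        simp only [Finset.mem_map, not_exists]
        rintro y ⟨-, h⟩
        exact hna₂ y h
      show ((insert a (Finset.map f₂ t)).erase a).preimage f₂ f₂.injective.injOn = t
      rw [Finset.erase_insert hat, Finset.preimage_map]
    · intro s hs
      simp only [Finset.mem_filter, Finset.mem_univ, true_and] at hs
      have hat : a ∉ ((s.erase a).preimage f₂ f₂.injective.injOn).map f₂ := by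
        simp only [Finset.mem_map, not_exists]
        rintro y ⟨-, h⟩
        exact hna₂ y h
      have hsub : ((s.erase a).preimage f₂ f₂.injective.injOn).map f₂ = s.erase a := by
        ext x
        simp only [Finset.mem_map, Finset.mem_preimage]
        constructor
        · rintro ⟨y, hy, rfl⟩; exact hy
        · intro hx
          obtain ⟨y, rfl⟩ := hr₂ x (Finset.ne_of_mem_erase hx)
            (hs.1 _ hs.2 _ (Finset.mem_of_mem_erase hx))
          exact ⟨y, hx, rfl⟩
      have hc : ((s.erase a).preimage f₂ f₂.injective.injOn).card = s.card - 1 := by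
        rw [← Finset.card_map f₂, hsub, Finset.card_erase_of_mem hs.2]
      show (X : Polynomial ℕ) ^ s.card = X * X ^ ((s.erase a).preimage f₂ f₂.injective.injOn).card
      rw [hc]
      have h1 : 1 ≤ s.card := Finset.card_pos.mpr ⟨a, hs.2⟩
      rw [← pow_succ']
      congr 1
      omega
  have h₁ : ∑ s ∈ (Finset.univ.filter
        (fun s : Finset V => ∀ u ∈ s, ∀ v ∈ s, ¬ G.Adj u v)).filter (fun s => a ∉ s),
      (X : Polynomial ℕ) ^ s.card = indepPoly H₁ := by
    rw [indepPoly]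
    refine Finset.sum_bij' (fun s _ => s.preimage f₁ f₁.injective.injOn)
      (fun t _ => t.map f₁) ?_ ?_ ?_ ?_ ?_
    · intro s hs
      simp only [Finset.mem_filter, Finset.mem_univ, true_and] at hs ⊢
      intro u hu v hv hadj
      rw [Finset.mem_preimage] at hu hv
      exact hs.1 _ hu _ hv ((hadj₁ u v).mp hadj)
    · intro t ht
      simp only [Finset.mem_filter, Finset.mem_univ, true_and] at ht ⊢
      constructor
      · intro u hu v hv hadj
        obtain ⟨w, hw, rfl⟩ := Finset.mem_map.mp hu
        obtain ⟨w', hw', rfl⟩ := Finset.mem_map.mp hv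
        exact ht _ hw _ hw' ((hadj₁ w w').mpr hadj)
      · simp only [Finset.mem_map, not_exists]
        rintro y ⟨-, h⟩
        exact hna₁ y h
    · intro s hs
      simp only [Finset.mem_filter, Finset.mem_univ, true_and] at hs
      show Finset.map f₁ (s.preimage f₁ f₁.injective.injOn) = s
      ext x
      simp only [Finset.mem_map, Finset.mem_preimage]
      constructor
      · rintro ⟨y, hy, rfl⟩; exact hy
      · intro hx
        obtain ⟨y, rfl⟩ := (hr₁ x).mp (fun h => hs.2 (h ▸ hx))
        exact ⟨y, hx, rfl⟩
    · intro t ht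
      show (Finset.map f₁ t).preimage f₁ f₁.injective.injOn = t
      rw [Finset.preimage_map]
    · intro s hs
      simp only [Finset.mem_filter, Finset.mem_univ, true_and] at hs
      have hsub : (s.preimage f₁ f₁.injective.injOn).map f₁ = s := by
        ext x
        simp only [Finset.mem_map, Finset.mem_preimage]
        constructor
        · rintro ⟨y, hy, rfl⟩; exact hy
        · intro hx
          obtain ⟨y, rfl⟩ := (hr₁ x).mp (fun h => hs.2 (h ▸ hx))
          exact ⟨y, hx, rfl⟩
      rw [← Finset.card_map f₁, hsub]
  rw [h₁, h₂]
  ring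

lemma indepPoly_sumG {V W : Type*} [Fintype V] [Fintype W]
    (G : SimpleGraph V) (H : SimpleGraph W) :
    indepPoly (G ⊕g H) = indepPoly G * indepPoly H := by
  classical
  unfold indepPoly
  rw [Finset.sum_mul_sum, ← Finset.sum_product']
  refine (Finset.sum_bij' (fun p _ => p.1.disjSum p.2)
    (fun u _ => (u.toLeft, u.toRight)) ?_ ?_ ?_ ?_ ?_).symm
  · intro p hp
    simp only [Finset.mem_product, Finset.mem_filter, Finset.mem_univ, true_and] at hp ⊢
    intro u hu v hv hadj
    rw [Finset.mem_disjSum] at hu hv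
    rcases hu with ⟨x, hx, rfl⟩ | ⟨x, hx, rfl⟩ <;>
      rcases hv with ⟨y, hy, rfl⟩ | ⟨y, hy, rfl⟩
    · exact hp.1 _ hx _ hy hadj
    · simp [SimpleGraph.sum] at hadj
    · simp [SimpleGraph.sum] at hadj
    · exact hp.2 _ hx _ hy hadj
  · intro u hu
    simp only [Finset.mem_filter, Finset.mem_univ, true_and] at hu
    simp only [Finset.mem_product, Finset.mem_filter, Finset.mem_univ, true_and]
    constructor
    · intro x hx y hy hadj
      exact hu _ (Finset.mem_toLeft.mp hx) _ (Finset.mem_toLeft.mp hy) hadj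
    · intro x hx y hy hadj
      exact hu _ (Finset.mem_toRight.mp hx) _ (Finset.mem_toRight.mp hy) hadj
  · intro p hp
    show ((p.1.disjSum p.2).toLeft, (p.1.disjSum p.2).toRight) = p
    rw [Finset.toLeft_disjSum, Finset.toRight_disjSum]
  · intro u hu
    show u.toLeft.disjSum u.toRight = u
    exact Finset.toLeft_disjSum_toRight
  · intro p hp
    show (X : Polynomial ℕ) ^ p.1.card * X ^ p.2.card = X ^ (p.1.disjSum p.2).card
    rw [Finset.card_disjSum, pow_add]

lemma indepPoly_path_zero : indepPoly (pathGraph 0) = 1 := by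
  classical
  unfold indepPoly
  rw [show (Finset.univ : Finset (Finset (Fin 0))) = {∅} from by decide]
  rw [Finset.filter_singleton, if_pos (fun u hu => u.elim0)]
  simp

lemma indepPoly_path_one : indepPoly (pathGraph 1) = 1 + X := by
  classical
  unfold indepPoly
  rw [show (Finset.univ : Finset (Finset (Fin 1))) = {∅, {0}} from by decide]
  have hp : ∀ s : Finset (Fin 1), ∀ u ∈ s, ∀ v ∈ s, ¬ (pathGraph 1).Adj u v := by
    intro s u hu v hv hadj
    rw [pathGraph_adj] at hadj
    omega
  rw [show ({∅, {0}} : Finset (Finset (Fin 1))) = insert ∅ {({0} : Finset (Fin 1))} from rfl]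
  rw [Finset.filter_insert, if_pos (hp ∅), Finset.filter_singleton, if_pos (hp {0})]
  rw [Finset.sum_pair (by decide)]
  simp

lemma indepPoly_path_rec (m : ℕ) :
    indepPoly (pathGraph (m + 2))
      = indepPoly (pathGraph (m + 1)) + X * indepPoly (pathGraph m) := by
  refine indepPoly_split _ _ _ (Fin.last (m + 1)) Fin.castSuccEmb
    (Fin.castLEEmb (by omega)) ?_ ?_ ?_ ?_ ?_ ?_
  · intro u v
    have hu := u.isLt; have hv := v.isLt
    simp [pathGraph_adj, Fin.castSuccEmb, Fin.castAddEmb]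
  · intro u v
    have hu := u.isLt; have hv := v.isLt
    simp [pathGraph_adj, Fin.castLEEmb]
  · intro x
    have hx := x.isLt
    constructor
    · intro h
      simp only [ne_eq, Fin.ext_iff, Fin.val_last] at h
      refine ⟨⟨x.val, by omega⟩, ?_⟩
      · simp [Fin.castSuccEmb, Fin.castAddEmb, Fin.ext_iff]
    · rintro ⟨y, rfl⟩
      have := y.isLt
      simp [Fin.castSuccEmb, Fin.castAddEmb, Fin.ext_iff, Fin.last]
      omega
  · intro w
    have := w.isLt
    rw [pathGraph_adj]
    simp [Fin.castLEEmb, Fin.last]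
    omega
  · intro y
    have := y.isLt
    simp [Fin.castLEEmb, Fin.ext_iff, Fin.last]
    omega
  · intro x hx hadj
    have hxl := x.isLt
    rw [pathGraph_adj] at hadj
    simp only [ne_eq, Fin.ext_iff, Fin.val_last] at hx
    simp [Fin.last] at hadj
    refine ⟨⟨x.val, by omega⟩, ?_⟩
    simp [Fin.castLEEmb, Fin.ext_iff]

lemma indepPoly_cycle (m : ℕ) :
    indepPoly (cycleGraph (m + 3))
      = indepPoly (pathGraph (m + 2)) + X * indepPoly (pathGraph m) := by
  refine indepPoly_split _ _ _ (0 : Fin (m + 3)) (Fin.succEmb (m + 2))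
    ⟨fun i => ⟨i.val + 2, by omega⟩, fun i j h => by
      simp only [Fin.mk.injEq] at h
      exact Fin.ext (by omega)⟩ ?_ ?_ ?_ ?_ ?_ ?_
  · intro u v
    have hu := u.isLt; have hv := v.isLt
    show (pathGraph (m + 2)).Adj u v ↔ (cycleGraph (m + 3)).Adj u.succ v.succ
    rw [pathGraph_adj, cycleGraph_adj]
    simp only [Fin.ext_iff, fin_sub_val, Fin.val_succ, Fin.val_one]
    split_ifs <;> omega
  · intro u v
    have hu := u.isLt; have hv := v.isLt
    show (pathGraph m).Adj u v ↔ (cycleGraph (m + 3)).Adj ⟨u.val + 2, by omega⟩ ⟨v.val + 2, by omega⟩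
    rw [pathGraph_adj, cycleGraph_adj]
    simp only [Fin.ext_iff, fin_sub_val, Fin.val_one]
    split_ifs <;> omega
  · intro x
    have hx := x.isLt
    constructor
    · intro h
      obtain ⟨y, hy⟩ := Fin.exists_succ_eq.mpr h
      exact ⟨y, hy⟩
    · rintro ⟨y, rfl⟩
      show y.succ ≠ 0
      exact Fin.succ_ne_zero y
  · intro w
    have := w.isLt
    show ¬ (cycleGraph (m + 3)).Adj 0 ⟨w.val + 2, by omega⟩
    rw [cycleGraph_adj]
    simp only [Fin.ext_iff, fin_sub_val, Fin.val_one, Fin.val_zero]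
    simp only [show ¬ (w.val + 2 ≤ 0) by omega, Nat.zero_le, if_true, if_false]
    omega
  · intro y
    have := y.isLt
    show (⟨y.val + 2, by omega⟩ : Fin (m + 3)) ≠ 0
    simp [Fin.ext_iff]
  · intro x hx hadj
    have hxl := x.isLt
    rw [cycleGraph_adj] at hadj
    simp only [ne_eq, Fin.ext_iff, Fin.val_zero] at hx
    simp only [Fin.ext_iff, fin_sub_val, Fin.val_one, Fin.val_zero, not_or] at hadj
    have h1 : ¬ x.val ≤ 0 := by omega
    refine ⟨⟨x.val - 2, ?_⟩, Fin.ext ?_⟩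
    · rcases hadj with ⟨ha, hb⟩
      simp only [h1, if_false] at ha
      simp only [Nat.zero_le, if_true] at hb
      omega
    · show x.val - 2 + 2 = x.val
      rcases hadj with ⟨ha, hb⟩
      simp only [h1, if_false] at ha
      simp only [Nat.zero_le, if_true] at hb
      omega


lemma indepPoly_path_add (a : ℕ) : ∀ b : ℕ,
    indepPoly (pathGraph (a + b + 3))
      = indepPoly (pathGraph (a + 1)) * indepPoly (pathGraph (b + 1))
        + X * (indepPoly (pathGraph a) * indepPoly (pathGraph b)) := by
  intro b
  induction b using Nat.twoStepInduction with
  | zero =>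
    show indepPoly (pathGraph ((a + 1) + 2))
      = indepPoly (pathGraph (a + 1)) * indepPoly (pathGraph 1)
        + X * (indepPoly (pathGraph a) * indepPoly (pathGraph 0))
    rw [indepPoly_path_rec (a + 1)]
    show indepPoly (pathGraph (a + 2)) + X * indepPoly (pathGraph (a + 1)) = _
    rw [indepPoly_path_rec a, indepPoly_path_one, indepPoly_path_zero]
    ring
  | one =>
    show indepPoly (pathGraph ((a + 2) + 2))
      = indepPoly (pathGraph (a + 1)) * indepPoly (pathGraph 2)
        + X * (indepPoly (pathGraph a) * indepPoly (pathGraph 1))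
    rw [indepPoly_path_rec (a + 2)]
    show indepPoly (pathGraph ((a + 1) + 2)) + X * indepPoly (pathGraph (a + 2)) = _
    rw [indepPoly_path_rec (a + 1), indepPoly_path_rec a,
      show (2 : ℕ) = 0 + 2 from rfl, indepPoly_path_rec 0,
      indepPoly_path_one, indepPoly_path_zero]
    ring
  | more b ih1 ih2 =>
    show indepPoly (pathGraph ((a + b + 3) + 2))
      = indepPoly (pathGraph (a + 1)) * indepPoly (pathGraph ((b + 1) + 2))
        + X * (indepPoly (pathGraph a) * indepPoly (pathGraph (b + 2)))
    have ih2' := ih2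
    rw [show b + 1 + 1 = b + 2 from rfl, indepPoly_path_rec b] at ih2'
    rw [indepPoly_path_rec (a + b + 3), indepPoly_path_rec (b + 1),
      show b + 1 + 1 = b + 2 from rfl, indepPoly_path_rec b,
      show a + b + 3 + 1 = a + (b + 1) + 3 from by omega, ih2', ih1]
    ring

lemma indepPoly_final (m : ℕ) :
    indepPoly (pathGraph (2 * (m + 2)))
      = indepPoly (pathGraph (m + 1)) * indepPoly (cycleGraph (m + 3)) := by
  rw [indepPoly_cycle m]
  have e : 2 * (m + 2) = m + (m + 1) + 3 := by ring
  rw [e, indepPoly_path_add m (m + 1)]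
  ring

theorem evenPath_indepEquiv_path_union_cycle (n : ℕ) (hn : 2 ≤ n) (k : ℕ) :
    indepCount (SimpleGraph.pathGraph (2 * n)) k
      = indepCount (SimpleGraph.pathGraph (n - 1) ⊕g SimpleGraph.cycleGraph (n + 1)) k := by
  obtain ⟨m, rfl⟩ : ∃ m, n = m + 2 := ⟨n - 2, by omega⟩
  rw [← indepPoly_coeff, ← indepPoly_coeff]
  congr 1
  show indepPoly (pathGraph (2 * (m + 2)))
    = indepPoly (pathGraph (m + 1) ⊕g cycleGraph (m + 3))
  rw [indepPoly_sumG, indepPoly_final]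
end

section
/- For every n ≥ 3, the cycle C_n is independence equivalent to the graph D_n; that is, for every k, the number of independent sets of size k in C_n equals the number of independent sets of size k in D_n. -/
open SimpleGraph Polynomial Finset

/-!
Independent sets of `G` split according to whether they contain a vertex `v`: those avoiding `v`
are the independent sets of `G - v`, and those containing `v` are `v` together with an independent
set of `G - N[v]`. So two graphs are independence equivalent as soon as `G - v = H - v` and
`G - N[v] ≅ H - N[v]`. For `C_n` and `D_n` take `v = 0`: both deletions of `0` are the path
`1 - 2 - ⋯ - (n-1)`, while `C_n - N[0]` is the path on `2, …, n-2` and `D_n - N[0]` the path on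
`3, …, n-1`, matched by the rotation `i ↦ i + 1`.
-/

theorem SimpleGraph.isIndepSet_coe_iff {V : Type*} {G : SimpleGraph V} {s : Finset V} :
    G.IsIndepSet (s : Set V) ↔ ∀ u ∈ s, ∀ w ∈ s, ¬G.Adj u w :=
  ⟨fun h _ hu _ hw huw => h hu hw (G.ne_of_adj huw) huw, fun h _ hu _ hw _ => h _ hu _ hw⟩

theorem indepCount_eq_natCard_isNIndepSet {V : Type*} [Fintype V] (G : SimpleGraph V) (k : ℕ) :
    indepCount G k = Nat.card {s : Finset V // G.IsNIndepSet k s} :=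
  Nat.card_congr <| Equiv.subtypeEquivRight fun s => by
    rw [isNIndepSet_iff, isIndepSet_coe_iff, and_comm]

namespace Finset

variable {V : Type*} [DecidableEq V] {v : V} {e : V ≃ V} {s : Finset V}

def mapOffIfMem (v : V) (e : V ≃ V) (s : Finset V) : Finset V :=
  if v ∈ s then insert v ((s.erase v).map e.toEmbedding) else s

theorem mapOffIfMem_of_mem (hv : v ∈ s) :
    mapOffIfMem v e s = insert v ((s.erase v).map e.toEmbedding) :=
  if_pos hv

theorem mapOffIfMem_of_notMem (hv : v ∉ s) : mapOffIfMem v e s = s :=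
  if_neg hv

end Finset

namespace SimpleGraph

variable {V : Type*} {G H : SimpleGraph V} {v : V} {e : V ≃ V}

theorem IsIndepSet.ne_and_not_adj_of_mem_erase [DecidableEq V] {s : Finset V}
    (hs : G.IsIndepSet s) (hv : v ∈ s) {a : V} (ha : a ∈ s.erase v) : a ≠ v ∧ ¬G.Adj v a :=
  ⟨ne_of_mem_erase ha, hs hv (mem_of_mem_erase ha) (ne_of_mem_erase ha).symm⟩

/-- `G - v = H - v`, and `e` restricts to an isomorphism `G - N_G[v] ≃g H - N_H[v]`. -/
structure IsDeletionIso (G H : SimpleGraph V) (v : V) (e : V ≃ V) : Prop where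
  adj_iff_of_ne : ∀ ⦃a b⦄, a ≠ v → b ≠ v → (G.Adj a b ↔ H.Adj a b)
  nonAdj_iff : ∀ w, (w ≠ v ∧ ¬G.Adj v w) ↔ (e w ≠ v ∧ ¬H.Adj v (e w))
  adj_iff_apply : ∀ ⦃a b⦄, a ≠ v → ¬G.Adj v a → b ≠ v → ¬G.Adj v b →
    (G.Adj a b ↔ H.Adj (e a) (e b))

namespace IsDeletionIso

theorem symm (h : IsDeletionIso G H v e) : IsDeletionIso H G v e.symm where
  adj_iff_of_ne a b ha hb := (h.adj_iff_of_ne ha hb).symm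
  nonAdj_iff w := by simpa using (h.nonAdj_iff (e.symm w)).symm
  adj_iff_apply a b ha hva hb hvb := by
    obtain ⟨ha', hva'⟩ := (h.nonAdj_iff (e.symm a)).2 (by simpa using And.intro ha hva)
    obtain ⟨hb', hvb'⟩ := (h.nonAdj_iff (e.symm b)).2 (by simpa using And.intro hb hvb)
    simpa using (h.adj_iff_apply ha' hva' hb' hvb').symm

variable [DecidableEq V] {s : Finset V}

theorem notMem_map_erase (h : IsDeletionIso G H v e) (hs : G.IsIndepSet s) (hv : v ∈ s) :
    v ∉ (s.erase v).map e.toEmbedding := by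
  simp only [mem_map, Equiv.coe_toEmbedding, not_exists, not_and]
  exact fun a ha => (h.nonAdj_iff a |>.1 (hs.ne_and_not_adj_of_mem_erase hv ha)).1

theorem isNIndepSet_mapOffIfMem (h : IsDeletionIso G H v e) {k : ℕ} (hs : G.IsNIndepSet k s) :
    H.IsNIndepSet k (mapOffIfMem v e s) := by
  by_cases hv : v ∈ s
  · have hlink : ∀ a ∈ s.erase v, ¬H.Adj v (e a) := fun a ha =>
      (h.nonAdj_iff a |>.1 (hs.isIndepSet.ne_and_not_adj_of_mem_erase hv ha)).2
    rw [mapOffIfMem_of_mem hv]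
    refine ⟨?_, ?_⟩
    · rw [isIndepSet_coe_iff]
      simp only [mem_insert, mem_map, Equiv.coe_toEmbedding]
      rintro _ (rfl | ⟨a, ha, rfl⟩) _ (rfl | ⟨b, hb, rfl⟩)
      · exact H.irrefl
      · exact hlink b hb
      · exact fun hadj => hlink a ha hadj.symm
      · obtain ⟨hav, hva⟩ := hs.isIndepSet.ne_and_not_adj_of_mem_erase hv ha
        obtain ⟨hbv, hvb⟩ := hs.isIndepSet.ne_and_not_adj_of_mem_erase hv hb
        rw [← h.adj_iff_apply hav hva hbv hvb]
        exact isIndepSet_coe_iff.1 hs.isIndepSet a (mem_of_mem_erase ha) b (mem_of_mem_erase hb)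
    · rw [card_insert_of_notMem (h.notMem_map_erase hs.isIndepSet hv), card_map,
        card_erase_add_one hv, hs.card_eq]
  · rw [mapOffIfMem_of_notMem hv]
    refine ⟨fun a ha b hb hab hadj => hs.isIndepSet ha hb hab ?_, hs.card_eq⟩
    exact (h.adj_iff_of_ne (ne_of_mem_of_not_mem ha hv) (ne_of_mem_of_not_mem hb hv)).2 hadj

theorem mapOffIfMem_symm_mapOffIfMem (h : IsDeletionIso G H v e) (hs : G.IsIndepSet s) :
    mapOffIfMem v e.symm (mapOffIfMem v e s) = s := by
  by_cases hv : v ∈ s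
  · rw [mapOffIfMem_of_mem hv, mapOffIfMem_of_mem (mem_insert_self _ _),
      erase_insert (h.notMem_map_erase hs hv), Finset.map_map]
    simp [insert_erase hv]
  · rw [mapOffIfMem_of_notMem hv, mapOffIfMem_of_notMem hv]

theorem indepCount_eq [Fintype V] (h : IsDeletionIso G H v e) (k : ℕ) :
    indepCount G k = indepCount H k := by
  rw [indepCount_eq_natCard_isNIndepSet, indepCount_eq_natCard_isNIndepSet]
  exact Nat.card_congr
    { toFun s := ⟨mapOffIfMem v e s, h.isNIndepSet_mapOffIfMem s.2⟩
      invFun s := ⟨mapOffIfMem v e.symm s, h.symm.isNIndepSet_mapOffIfMem s.2⟩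
      left_inv s := Subtype.ext (h.mapOffIfMem_symm_mapOffIfMem s.2.isIndepSet)
      right_inv s := Subtype.ext <| by
        simpa using h.symm.mapOffIfMem_symm_mapOffIfMem s.2.isIndepSet }

end IsDeletionIso

theorem cycleGraph_adj_iff_finRotate {n : ℕ} {u v : Fin n} :
    (cycleGraph n).Adj u v ↔ u ≠ v ∧ (finRotate n u = v ∨ finRotate n v = u) := by
  obtain ⟨m, rfl⟩ := Nat.exists_eq_succ_of_ne_zero u.pos.ne'
  rw [cycleGraph_eq_circulantGraph, circulantGraph_adj]
  simp only [Set.mem_singleton_iff, sub_eq_iff_eq_add', finRotate_apply]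
  grind

end SimpleGraph

theorem val_finRotate {n : ℕ} (i : Fin n) :
    (finRotate n i : ℕ) = if (i : ℕ) + 1 = n then 0 else (i : ℕ) + 1 := by
  obtain ⟨m, rfl⟩ := Nat.exists_eq_succ_of_ne_zero i.pos.ne'
  rw [coe_finRotate]
  simp [Fin.ext_iff]

theorem isDeletionIso_cycleGraph_dGraph {n : ℕ} (hn : 0 < n) :
    (cycleGraph n).IsDeletionIso (dGraph n) ⟨0, hn⟩ (finRotate n) := by
  refine ⟨fun a b ha hb => ?_, fun w => ?_, fun a b ha hva hb hvb => ?_⟩ <;>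
  · simp only [cycleGraph_adj_iff_finRotate, dGraph, fromRel_adj, Ne, Fin.ext_iff,
      val_finRotate] at *
    grind

theorem cycle_indepEquiv_dGraph (n : ℕ) (hn : 3 ≤ n) (k : ℕ) :
    indepCount (SimpleGraph.cycleGraph n) k = indepCount (dGraph n) k :=
  (isDeletionIso_cycleGraph_dGraph (by omega)).indepCount_eq k
end

section
/- For every n ≥ 0, the odd path P_{2n+1} is independence unique: if G is any finite simple graph such that for every k the number of independent sets of size k in G equals the number of independent sets of size k in P_{2n+1}, then G is isomorphic to P_{2n+1}. -/
open SimpleGraph Polynomial Finset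

open scoped Classical

section Aux

lemma indepCount_eq {V : Type*} [Fintype V] (G : SimpleGraph V) (k : ℕ) :
    indepCount G k = ((univ : Finset (Finset V)).filter
      (fun s => s.card = k ∧ ∀ u ∈ s, ∀ v ∈ s, ¬ G.Adj u v)).card := by
  rw [indepCount, Nat.card_eq_fintype_card, Fintype.card_subtype]

lemma indepCount_one_s6 {V : Type*} [Fintype V] (G : SimpleGraph V) :
    indepCount G 1 = Fintype.card V := by
  rw [indepCount_eq]
  have : ((univ : Finset (Finset V)).filter
      (fun s => s.card = 1 ∧ ∀ u ∈ s, ∀ v ∈ s, ¬ G.Adj u v)) = univ.image ({·}) := by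
    ext s
    simp only [mem_filter, mem_univ, true_and, mem_image]
    constructor
    · rintro ⟨h1, -⟩
      obtain ⟨v, rfl⟩ := Finset.card_eq_one.mp h1
      exact ⟨v, by simp⟩
    · rintro ⟨v, -, rfl⟩
      refine ⟨Finset.card_singleton v, ?_⟩
      intro u hu w hw
      simp only [mem_singleton] at hu hw
      subst hu; subst hw; exact G.irrefl
  rw [this, Finset.card_image_of_injective _ (fun a b hab => by simpa using hab)]
  simp

/-- number of k-subsets of {0,...,m-1} with no two consecutive elements -/
noncomputable def NC (m k : ℕ) : ℕ :=
  (((range m).powerset).filter (fun s => s.card = k ∧ ∀ a ∈ s, a + 1 ∉ s)).card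

lemma NC_zero (m : ℕ) : NC m 0 = 1 := by
  rw [NC]
  have : (((range m).powerset).filter (fun s => s.card = 0 ∧ ∀ a ∈ s, a + 1 ∉ s))
      = {∅} := by
    ext s
    simp only [mem_filter, mem_powerset, mem_singleton, Finset.card_eq_zero]
    constructor
    · rintro ⟨-, rfl, -⟩; rfl
    · rintro rfl; simp
  rw [this]; rfl

lemma NC_big (m k : ℕ) (h : m < k) : NC m k = 0 := by
  rw [NC, Finset.card_eq_zero]
  rw [Finset.eq_empty_iff_forall_notMem]
  rintro s hs
  simp only [mem_filter, mem_powerset] at hs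
  obtain ⟨h1, h2, -⟩ := hs
  have := Finset.card_le_card h1
  rw [h2, card_range] at this
  omega

lemma NC_one (k : ℕ) : NC 1 k = Nat.choose (2 - k) k := by
  match k with
  | 0 => rw [NC_zero]; rfl
  | 1 =>
    rw [NC]
    have : (((range 1).powerset).filter (fun s => s.card = 1 ∧ ∀ a ∈ s, a + 1 ∉ s))
        = {{0}} := by
      ext s
      simp only [mem_filter, mem_powerset, mem_singleton]
      constructor
      · rintro ⟨h1, h2, -⟩
        obtain ⟨v, rfl⟩ := Finset.card_eq_one.mp h2
        have := h1 (Finset.mem_singleton_self v)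
        simp only [mem_range] at this
        interval_cases v
        · rfl
      · rintro rfl
        refine ⟨by simp, by simp, by simp⟩
    rw [this]; rfl
  | (k+2) => rw [NC_big 1 (k+2) (by omega)]; simp [Nat.choose_eq_zero_of_lt]

lemma NC_rec (m k : ℕ) : NC (m + 2) (k + 1) = NC (m + 1) (k + 1) + NC m k := by
  rw [NC, NC, NC]
  rw [← Finset.card_filter_add_card_filter_not
    (p := fun s => (m+1) ∉ s) (s := ((range (m+2)).powerset).filter
      (fun s => s.card = k + 1 ∧ ∀ a ∈ s, a + 1 ∉ s))]
  congr 1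
  · -- sets not containing m+1
    congr 1
    ext s
    simp only [mem_filter, mem_powerset, and_assoc]
    constructor
    · rintro ⟨h1, h2, h3, h4⟩
      refine ⟨fun a ha => ?_, h2, h3⟩
      have := h1 ha
      simp only [mem_range] at this ⊢
      rcases Nat.lt_or_ge a (m+1) with h | h
      · exact h
      · exfalso; have : a = m + 1 := by omega
        subst this; exact h4 ha
    · rintro ⟨h1, h2, h3⟩
      refine ⟨fun a ha => ?_, h2, h3, fun hc => ?_⟩
      · have := h1 ha; simp only [mem_range] at this ⊢; omega
      · have := h1 hc; simp only [mem_range] at this; omega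
  · -- sets containing m+1 : biject with NC m k via erase
    refine Finset.card_bij' (fun s _ => s.erase (m+1)) (fun t _ => insert (m+1) t) ?_ ?_ ?_ ?_
    · rintro s hs
      simp only [mem_filter, mem_powerset, not_not] at hs ⊢
      obtain ⟨⟨h1, h2, h3⟩, h4⟩ := hs
      refine ⟨?_, ?_, ?_⟩
      · intro a ha
        simp only [mem_erase] at ha
        obtain ⟨hne, ha⟩ := ha
        have hlt := h1 ha
        simp only [mem_range] at hlt ⊢
        have : a ≠ m := fun hc => h3 a ha (by rw [hc]; exact h4)
        omega
      · rw [Finset.card_erase_of_mem h4, h2]; omega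
      · intro a ha
        simp only [mem_erase] at ha ⊢
        rintro ⟨-, hc⟩
        exact h3 a ha.2 hc
    · rintro t ht
      simp only [mem_filter, mem_powerset, not_not] at ht ⊢
      obtain ⟨h1, h2, h3⟩ := ht
      have hnm : (m+1) ∉ t := fun hc => by have := h1 hc; rw [mem_range] at this; omega
      refine ⟨⟨?_, ?_, ?_⟩, by simp⟩
      · intro a ha
        simp only [mem_insert] at ha
        rcases ha with rfl | ha
        · simp
        · have := h1 ha; simp only [mem_range] at this ⊢; omega
      · rw [Finset.card_insert_of_notMem hnm, h2]
      · intro a ha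
        simp only [mem_insert] at ha ⊢
        push_neg
        rcases ha with rfl | ha
        · constructor
          · omega
          · intro hc; have := h1 hc; rw [mem_range] at this; omega
        · constructor
          · have := h1 ha; simp only [mem_range] at this; omega
          · exact h3 a ha
    · rintro s hs
      simp only [mem_filter, not_not] at hs
      exact Finset.insert_erase hs.2
    · rintro t ht
      simp only [mem_filter, mem_powerset] at ht
      have hnm : (m+1) ∉ t := fun hc => by have := ht.1 hc; rw [mem_range] at this; omega
      exact Finset.erase_insert hnm

lemma NC_formula : ∀ m k, NC m k = Nat.choose (m + 1 - k) k := by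
  intro m
  induction m using Nat.strong_induction_on with
  | _ m IH =>
    match m with
    | 0 =>
      intro k
      match k with
      | 0 => rw [NC_zero]; simp
      | (k+1) =>
        rw [NC_big 0 (k+1) (by omega)]
        have h0 : 0 + 1 - (k+1) = 0 := by omega
        rw [h0, Nat.choose_zero_succ]
    | 1 => intro k; exact NC_one k
    | (m+2) =>
      intro k
      match k with
      | 0 => rw [NC_zero]; simp
      | (k+1) =>
        rw [NC_rec, IH (m+1) (by omega), IH m (by omega)]
        rcases Nat.lt_or_ge (m+1) (k+1) with h | h
        · rw [Nat.choose_eq_zero_of_lt (by omega), Nat.choose_eq_zero_of_lt (by omega),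
            Nat.choose_eq_zero_of_lt (by omega)]
        · have h1 : m + 2 + 1 - (k+1) = (m + 1 + 1 - (k+1)) + 1 := by omega
          have h2 : m + 1 - k = m + 1 + 1 - (k + 1) := by omega
          rw [h1, h2, Nat.choose_succ_succ]
          simp only [Nat.succ_eq_add_one]
          omega

lemma indepCount_path (m k : ℕ) : indepCount (pathGraph m) k = NC m k := by
  rw [indepCount_eq, NC]
  refine Finset.card_bij' (fun s _ => s.image Fin.val)
    (fun t ht => t.attachFin (fun a ha => ?_)) ?_ ?_ ?_ ?_
  · simp only [mem_filter, mem_powerset] at ht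
    have := ht.1 ha
    rwa [mem_range] at this
  · rintro s hs
    simp only [mem_filter, mem_univ, true_and, mem_powerset, Finset.subset_iff] at hs ⊢
    obtain ⟨h1, h2⟩ := hs
    refine ⟨?_, ?_, ?_⟩
    · intro a ha
      simp only [mem_image] at ha
      obtain ⟨u, -, rfl⟩ := ha
      simp [mem_range, u.isLt]
    · rw [Finset.card_image_of_injective _ Fin.val_injective, h1]
    · intro a ha hc
      simp only [mem_image] at ha hc
      obtain ⟨u, hu, rfl⟩ := ha
      obtain ⟨v, hv, hv2⟩ := hc
      exact h2 u hu v hv (pathGraph_adj.mpr (Or.inl hv2.symm))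
  · rintro t ht
    simp only [mem_filter, mem_powerset, mem_univ, true_and] at ht ⊢
    obtain ⟨h1, h2, h3⟩ := ht
    refine ⟨by rw [Finset.card_attachFin, h2], ?_⟩
    intro u hu v hv hadj
    rw [Finset.mem_attachFin] at hu hv
    rcases pathGraph_adj.mp hadj with hc | hc
    · exact h3 _ hu (by rw [hc]; exact hv)
    · exact h3 _ hv (by rw [hc]; exact hu)
  · rintro s hs
    ext u
    rw [Finset.mem_attachFin]
    simp only [mem_image]
    constructor
    · rintro ⟨v, hv, hveq⟩
      rwa [Fin.val_injective hveq] at hv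
    · intro hu; exact ⟨u, hu, rfl⟩
  · rintro t ht
    ext a
    simp only [mem_image]
    constructor
    · rintro ⟨u, hu, rfl⟩
      rwa [Finset.mem_attachFin] at hu
    · intro ha
      simp only [mem_filter, mem_powerset] at ht
      have hlt : a < m := by have := ht.1 ha; rwa [mem_range] at this
      exact ⟨⟨a, hlt⟩, by rwa [Finset.mem_attachFin], rfl⟩

lemma indepCount_path_formula (m k : ℕ) :
    indepCount (pathGraph m) k = Nat.choose (m + 1 - k) k := by
  rw [indepCount_path, NC_formula]

variable {V : Type*} {G : SimpleGraph V}

lemma walk_closed {S : Set V} (hS : ∀ u ∈ S, ∀ v, G.Adj u v → v ∈ S) :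
    ∀ {u v : V} (_ : G.Walk u v), u ∈ S → v ∈ S := by
  intro u v p
  induction p with
  | nil => exact id
  | cons h q ih => intro hu; exact ih (hS _ hu _ h)

lemma walk_exists_adj : ∀ {u v : V} (p : G.Walk u v), ¬p.Nil →
    ∀ x ∈ p.support, ∃ y ∈ p.support, G.Adj x y := by
  intro u v p
  induction p with
  | nil => intro hnil; simp at hnil
  | @cons u w v h q ih =>
    intro _ x hx
    rw [Walk.support_cons, List.mem_cons] at hx
    rcases hx with rfl | hx
    · refine ⟨w, ?_, h⟩
      rw [Walk.support_cons, List.mem_cons]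
      exact Or.inr q.start_mem_support
    · by_cases hxw : x = w
      · subst hxw
        refine ⟨u, ?_, h.symm⟩
        rw [Walk.support_cons, List.mem_cons]; exact Or.inl rfl
      · have hqnil : ¬q.Nil := by
          intro hq
          rw [Walk.nil_iff_support_eq] at hq
          rw [hq, List.mem_singleton] at hx
          exact hxw hx
        obtain ⟨y, hy, hadj⟩ := ih hqnil x hx
        refine ⟨y, ?_, hadj⟩
        rw [Walk.support_cons, List.mem_cons]; exact Or.inr hy

lemma walk_interior_two : ∀ {u v : V} (p : G.Walk u v), p.IsPath →
    ∀ x ∈ p.support, x ≠ u → x ≠ v →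
    ∃ y z, y ∈ p.support ∧ z ∈ p.support ∧ y ≠ z ∧ G.Adj x y ∧ G.Adj x z := by
  intro u v p
  induction p with
  | nil =>
    intro _ x hx hxu _
    rw [Walk.support_nil, List.mem_singleton] at hx
    exact absurd hx hxu
  | @cons u w v h q ih =>
    intro hp x hx hxu hxv
    rw [Walk.cons_isPath_iff] at hp
    rw [Walk.support_cons, List.mem_cons] at hx
    rcases hx with rfl | hx
    · exact absurd rfl hxu
    · by_cases hxw : x = w
      · subst hxw
        -- x = w : neighbors u and the next vertex of q
        have hqnil : ¬q.Nil := by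
          intro hq
          have := (Walk.nil_iff_support_eq.mp hq)
          have : x = v := by
            have := q.end_mem_support
            rw [Walk.nil_iff_support_eq.mp hq, List.mem_singleton] at this
            exact this.symm
          exact hxv this
        rw [Walk.not_nil_iff] at hqnil
        obtain ⟨x', hadj', q', rfl⟩ := hqnil
        refine ⟨u, x', ?_, ?_, ?_, h.symm, hadj'⟩
        · rw [Walk.support_cons, List.mem_cons]; exact Or.inl rfl
        · rw [Walk.support_cons, List.mem_cons]
          refine Or.inr ?_
          rw [Walk.support_cons, List.mem_cons]
          exact Or.inr q'.start_mem_support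
        · intro hc
          apply hp.2
          rw [hc]
          rw [Walk.support_cons, List.mem_cons]
          exact Or.inr q'.start_mem_support
      · obtain ⟨y, z, hy, hz, hyz, a1, a2⟩ := ih hp.1 x hx hxw hxv
        refine ⟨y, z, ?_, ?_, hyz, a1, a2⟩
        · rw [Walk.support_cons, List.mem_cons]; exact Or.inr hy
        · rw [Walk.support_cons, List.mem_cons]; exact Or.inr hz

lemma walk_alt [Fintype V] (A : Finset V)
    (hcross : ∀ {x y : V}, G.Adj x y → (x ∈ A ↔ y ∉ A)) :
    ∀ {u v : V} (p : G.Walk u v), p.IsPath → v ∈ A →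
      (A.filter (· ∈ p.support)).card
        = ((Aᶜ).filter (· ∈ p.support)).card + (if u ∈ A then 1 else 0) := by
  intro u v p
  induction p with
  | @nil u =>
    intro _ hv
    rw [if_pos hv]
    have h1 : A.filter (· ∈ (Walk.nil : G.Walk u u).support) = {u} := by
      ext x
      rw [Walk.support_nil]
      simp only [mem_filter, List.mem_singleton, mem_singleton]
      constructor
      · rintro ⟨-, rfl⟩; rfl
      · rintro rfl; exact ⟨hv, rfl⟩
    have h2 : (Aᶜ).filter (· ∈ (Walk.nil : G.Walk u u).support) = ∅ := by
      ext x
      rw [Walk.support_nil]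
      simp only [mem_filter, List.mem_singleton, mem_compl, notMem_empty, iff_false, not_and]
      rintro hx rfl; exact hx hv
    rw [h1, h2]; simp
  | @cons u w v h q ih =>
    intro hp hv
    rw [Walk.cons_isPath_iff] at hp
    have ihq := ih hp.1 hv
    have husup : u ∉ q.support := hp.2
    by_cases hu : u ∈ A
    · have hw : w ∉ A := (hcross h).mp hu
      have e1 : A.filter (· ∈ (Walk.cons h q).support) = insert u (A.filter (· ∈ q.support)) := by
        ext x
        rw [Walk.support_cons]
        simp only [mem_filter, List.mem_cons, mem_insert]
        constructor
        · rintro ⟨hxA, rfl | hxs⟩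
          · exact Or.inl rfl
          · exact Or.inr ⟨hxA, hxs⟩
        · rintro (rfl | ⟨hxA, hxs⟩)
          · exact ⟨hu, Or.inl rfl⟩
          · exact ⟨hxA, Or.inr hxs⟩
      have e2 : (Aᶜ).filter (· ∈ (Walk.cons h q).support) = (Aᶜ).filter (· ∈ q.support) := by
        ext x
        rw [Walk.support_cons]
        simp only [mem_filter, List.mem_cons, mem_compl]
        constructor
        · rintro ⟨hxA, rfl | hxs⟩
          · exact absurd hu hxA
          · exact ⟨hxA, hxs⟩
        · rintro ⟨hxA, hxs⟩; exact ⟨hxA, Or.inr hxs⟩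
      rw [e1, e2, Finset.card_insert_of_notMem (fun hc => husup (Finset.mem_filter.mp hc).2),
        ihq, if_pos hu, if_neg hw]
    · have hw : w ∈ A := by
        by_contra hw
        exact hu ((hcross h).mpr hw)
      have e1 : A.filter (· ∈ (Walk.cons h q).support) = A.filter (· ∈ q.support) := by
        ext x
        rw [Walk.support_cons]
        simp only [mem_filter, List.mem_cons]
        constructor
        · rintro ⟨hxA, rfl | hxs⟩
          · exact absurd hxA hu
          · exact ⟨hxA, hxs⟩
        · rintro ⟨hxA, hxs⟩; exact ⟨hxA, Or.inr hxs⟩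
      have e2 : (Aᶜ).filter (· ∈ (Walk.cons h q).support)
          = insert u ((Aᶜ).filter (· ∈ q.support)) := by
        ext x
        rw [Walk.support_cons]
        simp only [mem_filter, List.mem_cons, mem_insert, mem_compl]
        constructor
        · rintro ⟨hxA, rfl | hxs⟩
          · exact Or.inl rfl
          · exact Or.inr ⟨hxA, hxs⟩
        · rintro (rfl | ⟨hxA, hxs⟩)
          · exact ⟨hu, Or.inl rfl⟩
          · exact ⟨hxA, Or.inr hxs⟩
      rw [e1, e2, Finset.card_insert_of_notMem (fun hc => husup (Finset.mem_filter.mp hc).2),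
        ihq, if_pos hw, if_neg hu]

lemma iso_path (N : ℕ) [Fintype V] (hcard : Fintype.card V = N + 2) (hconn : G.Preconnected)
    (hdeg : ∀ v, G.degree v ≤ 2) (a₀ : V) (h₀ : G.degree a₀ = 1) :
    Nonempty (G ≃g pathGraph (N + 2)) := by
  classical
  have hne : ∃ w, G.Adj a₀ w := by
    have : (G.neighborFinset a₀).Nonempty := by
      rw [← Finset.card_pos, card_neighborFinset_eq_degree, h₀]; norm_num
    obtain ⟨w, hw⟩ := this
    exact ⟨w, (mem_neighborFinset _ _ _).mp hw⟩
  set w₀ := hne.choose with hw₀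
  have hadj₀ : G.Adj a₀ w₀ := hne.choose_spec
  have hnbr₀ : G.neighborFinset a₀ = {w₀} := by
    refine (Finset.eq_of_subset_of_card_le ?_ ?_).symm
    · intro x hx
      rw [Finset.mem_singleton] at hx
      rw [hx, mem_neighborFinset]; exact hadj₀
    · rw [card_neighborFinset_eq_degree, h₀, Finset.card_singleton]
  -- the walk function
  let next : V → V → V := fun prev cur =>
    if h : ∃ w, G.Adj cur w ∧ w ≠ prev then h.choose else cur
  let g : ℕ → V × V := fun k => Nat.rec (a₀, w₀) (fun _ pr => (pr.2, next pr.1 pr.2)) k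
  let f : ℕ → V := fun k => (g k).1
  have hf0 : f 0 = a₀ := rfl
  have hf1 : f 1 = w₀ := rfl
  have hfs : ∀ k, f (k + 2) = next (f k) (f (k + 1)) := by
    intro k
    show (g (k+2)).1 = next (f k) (f (k+1))
    have h1 : g (k+1) = ((g k).2, next (g k).1 (g k).2) := rfl
    have h2 : g (k+2) = ((g (k+1)).2, next (g (k+1)).1 (g (k+1)).2) := rfl
    rw [h2, h1]
  -- invariant
  have inv : ∀ k, k ≤ N + 1 →
      (∀ i j, i < j → j ≤ k → f i ≠ f j) ∧ (∀ i, i < k → G.Adj (f i) (f (i+1))) := by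
    intro k
    induction k with
    | zero => intro _; exact ⟨fun i j hij hj => by omega, fun i hi => by omega⟩
    | succ k IH =>
      intro hk
      obtain ⟨hinj, hadj⟩ := IH (by omega)
      -- first : the next step exists and is adjacent & not equal to previous
      have hstep : G.Adj (f k) (f (k+1)) ∧ (k ≥ 1 → f (k+1) ≠ f (k-1)) := by
        rcases k with _ | j
        · exact ⟨hadj₀, by omega⟩
        · 
          -- k = j+1 ≥ 1, f(k+1) = next (f j) (f (j+1))
          have hdegfk : ∃ w, G.Adj (f (j+1)) w ∧ w ≠ f j := by
            by_contra hcon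
            push_neg at hcon
            -- then neighbors of f (j+1) ⊆ {f j}, the image of f on [0,j+1] is closed
            have hnbr : ∀ x, G.Adj (f (j+1)) x → x = f j := fun x hx => hcon x hx
            set S : Set V := {v | ∃ i, i ≤ j + 1 ∧ f i = v} with hS
            have hclosed : ∀ u ∈ S, ∀ v, G.Adj u v → v ∈ S := by
              rintro u ⟨i, hi, rfl⟩ v huv
              rcases i with _ | i
              · have : v ∈ G.neighborFinset a₀ := by rw [mem_neighborFinset]; exact huv
                rw [hnbr₀, Finset.mem_singleton] at this
                exact ⟨1, by omega, by rw [this, hf1]⟩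
              · 
                rcases Nat.lt_or_ge (i+1) (j+1) with hlt | hge
                · -- interior: neighbors are f i and f (i+2)
                  have h1 : G.Adj (f (i+1)) (f i) := (hadj i (by omega)).symm
                  have h2 : G.Adj (f (i+1)) (f (i+2)) := hadj (i+1) (by omega)
                  have hij : f i ≠ f (i+2) := hinj i (i+2) (by omega) (by omega)
                  have hsub : {f i, f (i+2)} ⊆ G.neighborFinset (f (i+1)) := by
                    intro x hx
                    rw [Finset.mem_insert, Finset.mem_singleton] at hx
                    rcases hx with rfl | rfl <;> rw [mem_neighborFinset]
                    · exact h1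
                    · exact h2
                  have hcard2 : ({f i, f (i+2)} : Finset V).card = 2 := by
                    rw [Finset.card_insert_of_notMem (by simpa using hij), Finset.card_singleton]
                  have heq : ({f i, f (i+2)} : Finset V) = G.neighborFinset (f (i+1)) := by
                    apply Finset.eq_of_subset_of_card_le hsub
                    rw [hcard2, card_neighborFinset_eq_degree]
                    exact hdeg _
                  have : v ∈ ({f i, f (i+2)} : Finset V) := by
                    rw [heq, mem_neighborFinset]; exact huv
                  rw [Finset.mem_insert, Finset.mem_singleton] at this
                  rcases this with rfl | rfl
                  · exact ⟨i, by omega, rfl⟩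
                  · exact ⟨i+2, by omega, rfl⟩
                · -- i+1 = j+1 : endpoint, neighbor is f j only
                  have hieq : i + 1 = j + 1 := by omega
                  rw [hieq] at huv
                  have hvj := hnbr v huv
                  exact ⟨j, by omega, hvj.symm⟩
            have hall : ∀ x : V, x ∈ S := by
              intro x
              obtain ⟨p⟩ := hconn a₀ x
              exact walk_closed hclosed p ⟨0, by omega, rfl⟩
            have h1 : Fintype.card V ≤ j + 2 := by
              have hsub2 : (Finset.univ : Finset V) ⊆ (Finset.range (j+2)).image f := by
                intro x _
                obtain ⟨i, hi, rfl⟩ := hall x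
                rw [Finset.mem_image]
                exact ⟨i, Finset.mem_range.mpr (by omega), rfl⟩
              calc Fintype.card V = Finset.univ.card := by rw [Finset.card_univ]
                _ ≤ ((Finset.range (j+2)).image f).card := Finset.card_le_card hsub2
                _ ≤ (Finset.range (j+2)).card := Finset.card_image_le
                _ = j + 2 := by rw [Finset.card_range]
            omega
          have hch : f (j + 2) = hdegfk.choose := by
            rw [hfs j]
            simp only [next]
            rw [dif_pos hdegfk]
          constructor
          · rw [hch]
            exact hdegfk.choose_spec.1
          · intro _
            have h2 := hdegfk.choose_spec.2
            rw [hch]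
            simpa using h2
      -- freshness
      have hfresh : ∀ i, i ≤ k → f (k+1) ≠ f i := by
        intro i hi hceq
        rcases Nat.eq_or_lt_of_le hi with rfl | hlt
        · exact G.irrefl (hceq ▸ hstep.1)
        · have hik : i < k := hlt
          rcases Nat.eq_or_lt_of_le (Nat.succ_le_of_lt hik) with heq | hlt2
          · -- i = k - 1
            have hk1 : k ≥ 1 := by omega
            have hi2 : i = k - 1 := by omega
            exact (hstep.2 hk1) (by rw [hceq, hi2])
          · -- i + 1 < k
            rcases i with _ | i
            · 
              -- f(k+1) = a₀ : then f k ∈ nbr a₀ = {w₀} = {f 1}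
              have hmem : f k ∈ G.neighborFinset a₀ := by
                rw [mem_neighborFinset]
                exact (hceq ▸ hstep.1).symm
              rw [hnbr₀, Finset.mem_singleton, ← hf1] at hmem
              exact hinj 1 k (by omega) (le_refl k) hmem.symm
            · 
              -- f (i+1) has neighbors f i, f (i+2), f k : 3 distinct
              have h1 : G.Adj (f (i+1)) (f i) := (hadj i (by omega)).symm
              have h2 : G.Adj (f (i+1)) (f (i+2)) := hadj (i+1) (by omega)
              have h3 : G.Adj (f (i+1)) (f k) := by
                rw [← hceq]; exact hstep.1.symm
              have d12 : f i ≠ f (i+2) := hinj i (i+2) (by omega) (by omega)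
              have d13 : f i ≠ f k := hinj i k (by omega) (le_refl k)
              have d23 : f (i+2) ≠ f k := hinj (i+2) k (by omega) (le_refl k)
              have hsub : {f i, f (i+2), f k} ⊆ G.neighborFinset (f (i+1)) := by
                intro x hx
                simp only [Finset.mem_insert, Finset.mem_singleton] at hx
                rcases hx with rfl | rfl | rfl <;> rw [mem_neighborFinset]
                · exact h1
                · exact h2
                · exact h3
              have hcard3 : ({f i, f (i+2), f k} : Finset V).card = 3 := by
                rw [Finset.card_insert_of_notMem (by simp [d12, d13]),
                  Finset.card_insert_of_notMem (by simpa using d23), Finset.card_singleton]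
              have hle := Finset.card_le_card hsub
              rw [hcard3, card_neighborFinset_eq_degree] at hle
              have := hdeg (f (i+1))
              omega
      refine ⟨?_, ?_⟩
      · intro i j hij hj
        rcases Nat.eq_or_lt_of_le hj with rfl | hlt
        · exact fun hc => hfresh i (by omega) hc.symm
        · exact hinj i j hij (by omega)
      · intro i hi
        rcases Nat.eq_or_lt_of_le (Nat.succ_le_of_lt hi) with heq | hlt
        · have : i = k := by omega
          rw [this]; exact hstep.1
        · exact hadj i (by omega)
  obtain ⟨hinj, hadj⟩ := inv (N+1) (le_refl _)
  -- the bijection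
  have hinj' : Function.Injective (fun i : Fin (N+2) => f i.val) := by
    intro i j hij
    by_contra hne2
    rcases Nat.lt_trichotomy i.val j.val with hlt | heq | hlt
    · exact hinj i.val j.val hlt (by omega) hij
    · exact hne2 (Fin.ext heq)
    · exact hinj j.val i.val hlt (by omega) hij.symm
  have hbij : Function.Bijective (fun i : Fin (N+2) => f i.val) := by
    rw [Fintype.bijective_iff_injective_and_card]
    exact ⟨hinj', by simp [hcard]⟩
  -- adjacency characterization
  have hadj_iff : ∀ i j : Fin (N+2), G.Adj (f i.val) (f j.val) ↔
      (i.val + 1 = j.val ∨ j.val + 1 = i.val) := by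
    have key : ∀ i j : ℕ, i < j → j ≤ N + 1 → G.Adj (f i) (f j) → i + 1 = j := by
      intro i j hij hj hadj2
      by_contra hne2
      have hj2 : i + 2 ≤ j := by omega
      rcases i with _ | i
      · 
        have hmem : f j ∈ G.neighborFinset a₀ := by rw [mem_neighborFinset]; exact hadj2
        rw [hnbr₀, Finset.mem_singleton, ← hf1] at hmem
        exact hinj 1 j (by omega) hj hmem.symm
      · 
        have h1 : G.Adj (f (i+1)) (f i) := (hadj i (by omega)).symm
        have h2 : G.Adj (f (i+1)) (f (i+2)) := hadj (i+1) (by omega)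
        have d12 : f i ≠ f (i+2) := hinj i (i+2) (by omega) (by omega)
        have d13 : f i ≠ f j := hinj i j (by omega) hj
        have d23 : f (i+2) ≠ f j := by
          intro hc
          have : i + 2 = j ∨ i + 2 < j := by omega
          rcases this with heq | hlt
          · omega
          · exact hinj (i+2) j hlt hj hc
        have hsub : {f i, f (i+2), f j} ⊆ G.neighborFinset (f (i+1)) := by
          intro x hx
          simp only [Finset.mem_insert, Finset.mem_singleton] at hx
          rcases hx with rfl | rfl | rfl <;> rw [mem_neighborFinset]
          · exact h1
          · exact h2
          · exact hadj2
        have hcard3 : ({f i, f (i+2), f j} : Finset V).card = 3 := by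
          rw [Finset.card_insert_of_notMem (by simp [d12, d13]),
            Finset.card_insert_of_notMem (by simpa using d23), Finset.card_singleton]
        have hle := Finset.card_le_card hsub
        rw [hcard3, card_neighborFinset_eq_degree] at hle
        have := hdeg (f (i+1))
        omega
    intro i j
    constructor
    · intro hadj2
      rcases Nat.lt_trichotomy i.val j.val with hlt | heq | hlt
      · exact Or.inl (key i.val j.val hlt (by omega) hadj2)
      · exact absurd hadj2 (by rw [show (i : Fin (N+2)) = j from Fin.ext heq]; exact G.irrefl)
      · exact Or.inr (key j.val i.val hlt (by omega) hadj2.symm)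
    · rintro (hc | hc)
      · have : G.Adj (f i.val) (f (i.val + 1)) := hadj i.val (by omega)
        rwa [hc] at this
      · have : G.Adj (f j.val) (f (j.val + 1)) := hadj j.val (by omega)
        rw [hc] at this
        exact this.symm
  -- build the iso
  let e : Fin (N+2) ≃ V := Equiv.ofBijective _ hbij
  refine ⟨?_⟩
  have iso1 : pathGraph (N+2) ≃g G := by
    refine ⟨e, ?_⟩
    intro i j
    show G.Adj (f i.val) (f j.val) ↔ (pathGraph (N+2)).Adj i j
    rw [hadj_iff, pathGraph_adj]
  exact iso1.symm

end Aux

set_option maxHeartbeats 1000000 in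
theorem oddPath_indepUnique {V : Type*} [Fintype V] (G : SimpleGraph V) (n : ℕ)
    (h : ∀ k, indepCount G k = indepCount (SimpleGraph.pathGraph (2 * n + 1)) k) :
    Nonempty (G ≃g SimpleGraph.pathGraph (2 * n + 1)) := by
  classical
  have hGk : ∀ k, indepCount G k = Nat.choose (2*n+2-k) k := by
    intro k
    rw [h k, indepCount_path_formula, show 2*n+1+1-k = 2*n+2-k by omega]
  have hcardV : Fintype.card V = 2*n+1 := by
    have h1 := hGk 1
    rw [indepCount_one_s6] at h1
    rw [h1, show 2*n+2-1 = 2*n+1 by omega, Nat.choose_one_right]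
  rcases Nat.eq_zero_or_pos n with rfl | hn
  · -- n = 0 : one vertex
    haveI hsub : Subsingleton V := by
      rw [← Fintype.card_le_one_iff_subsingleton, hcardV]
    refine ⟨⟨Fintype.equivFinOfCardEq (by simpa using hcardV), @fun u v => ?_⟩⟩
    have huv : u = v := Subsingleton.elim u v
    subst huv
    exact iff_of_false (SimpleGraph.irrefl _) (SimpleGraph.irrefl _)
  -- n ≥ 1
  set Fk : ℕ → Finset (Finset V) := fun k => (univ : Finset (Finset V)).filter
      (fun s => s.card = k ∧ ∀ u ∈ s, ∀ v ∈ s, ¬ G.Adj u v) with hFk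
  have hch : ∀ k, (Fk k).card = Nat.choose (2*n+2-k) k := by
    intro k; rw [hFk, ← indepCount_eq]; exact hGk k
  -- no independent set of size > n+1
  have hno : ∀ s : Finset V, (∀ u ∈ s, ∀ v ∈ s, ¬G.Adj u v) → s.card ≤ n+1 := by
    intro s hs
    by_contra hc
    push_neg at hc
    obtain ⟨t, hts, htc⟩ := Finset.exists_subset_card_eq (s := s) (n := n+2) (by omega)
    have hmem : t ∈ Fk (n+2) := by
      rw [hFk, mem_filter]
      exact ⟨mem_univ _, htc, fun u hu v hv => hs u (hts hu) v (hts hv)⟩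
    have h0 := hch (n+2)
    rw [show 2*n+2-(n+2) = n by omega, Nat.choose_eq_zero_of_lt (by omega),
      Finset.card_eq_zero] at h0
    rw [h0] at hmem
    exact absurd hmem (notMem_empty t)
  -- unique maximum independent set A
  have h1 := hch (n+1)
  rw [show 2*n+2-(n+1) = n+1 by omega, Nat.choose_self] at h1
  obtain ⟨A, hA⟩ := Finset.card_eq_one.mp h1
  have hAmem : A ∈ Fk (n+1) := by rw [hA]; exact mem_singleton_self A
  rw [hFk, mem_filter] at hAmem
  have hAcard : A.card = n+1 := hAmem.2.1
  have hAindep : ∀ u ∈ A, ∀ v ∈ A, ¬G.Adj u v := hAmem.2.2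
  have hAuniq : ∀ s : Finset V, s.card = n+1 → (∀ u ∈ s, ∀ v ∈ s, ¬G.Adj u v) → s = A := by
    intro s h1' h2'
    have : s ∈ Fk (n+1) := by rw [hFk, mem_filter]; exact ⟨mem_univ _, h1', h2'⟩
    rw [hA, mem_singleton] at this
    exact this
  have hBcard : (Aᶜ : Finset V).card = n := by
    rw [Finset.card_compl, hAcard, hcardV]; omega
  -- the neighborhood function
  set NA : Finset V → Finset V := fun T => A.filter (fun a => ∃ b ∈ T, G.Adj a b) with hNA
  have hNAsubA : ∀ T, NA T ⊆ A := fun T => filter_subset _ _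
  -- expansion property
  have hext0 : ∀ T : Finset V, T ⊆ Aᶜ → T.Nonempty →
      (∀ u ∈ T, ∀ v ∈ T, ¬ G.Adj u v) → T.card + 1 ≤ (NA T).card := by
    intro T hTB hTne hTind
    by_contra hc
    push_neg at hc
    have h2 : (NA T).card ≤ T.card := by omega
    set s := T ∪ (A \ NA T) with hs
    have hdisj : Disjoint T (A \ NA T) := by
      refine Finset.disjoint_left.mpr ?_
      intro x hxT hxA
      exact (Finset.mem_compl.mp (hTB hxT)) (Finset.mem_sdiff.mp hxA).1
    have hsind : ∀ u ∈ s, ∀ v ∈ s, ¬G.Adj u v := by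
      intro u hu v hv
      rw [hs, Finset.mem_union] at hu hv
      rcases hu with hu | hu <;> rcases hv with hv | hv
      · exact hTind u hu v hv
      · intro hadj
        have : v ∈ NA T := by
          rw [hNA]; exact mem_filter.mpr ⟨(mem_sdiff.mp hv).1, u, hu, hadj.symm⟩
        exact (mem_sdiff.mp hv).2 this
      · intro hadj
        have : u ∈ NA T := by
          rw [hNA]; exact mem_filter.mpr ⟨(mem_sdiff.mp hu).1, v, hv, hadj⟩
        exact (mem_sdiff.mp hu).2 this
      · exact hAindep u (mem_sdiff.mp hu).1 v (mem_sdiff.mp hv).1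
    have hNAle : (NA T).card ≤ n+1 := hAcard ▸ card_le_card (hNAsubA T)
    have hscard : s.card = T.card + ((n+1) - (NA T).card) := by
      rw [hs, Finset.card_union_of_disjoint hdisj, Finset.card_sdiff_of_subset (hNAsubA T), hAcard]
    have h3 : s.card = n+1 := by
      have := hno s hsind
      omega
    have h4 : s = A := hAuniq s h3 hsind
    obtain ⟨x, hx⟩ := hTne
    have hxA : x ∈ A := by rw [← h4, hs]; exact Finset.mem_union_left _ hx
    exact (Finset.mem_compl.mp (hTB hx)) hxA
  -- every vertex outside A has ≥ 2 neighbours in A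
  have hdAge : ∀ b ∈ (Aᶜ : Finset V), 2 ≤ (A.filter (fun a => G.Adj a b)).card := by
    intro b hb
    have hind : ∀ u ∈ ({b} : Finset V), ∀ v ∈ ({b} : Finset V), ¬G.Adj u v := by
      intro u hu v hv
      rw [mem_singleton] at hu hv
      subst hu; subst hv
      exact G.irrefl
    have h1' := hext0 {b} (by simpa using hb) ⟨b, mem_singleton_self b⟩ hind
    have h2' : NA {b} = A.filter (fun a => G.Adj a b) := by
      rw [hNA]
      apply filter_congr
      intro a _
      simp
    rw [h2', Finset.card_singleton] at h1'
    exact h1'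
  -- count of non-independent pairs is 2n
  have hP2card : ((univ : Finset V).powersetCard 2).card = Nat.choose (2*n+1) 2 := by
    rw [Finset.card_powersetCard, Finset.card_univ, hcardV]
  have hnon2 : (((univ : Finset V).powersetCard 2).filter
      (fun s => ¬ ∀ u ∈ s, ∀ v ∈ s, ¬G.Adj u v)).card = 2*n := by
    have hsplit := Finset.card_filter_add_card_filter_not
      (s := (univ : Finset V).powersetCard 2) (p := fun s => ∀ u ∈ s, ∀ v ∈ s, ¬G.Adj u v)
    have hfi : ((univ : Finset V).powersetCard 2).filter
        (fun s => ∀ u ∈ s, ∀ v ∈ s, ¬G.Adj u v) = Fk 2 := by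
      ext s
      rw [hFk]
      simp only [mem_filter, Finset.mem_powersetCard, mem_univ, true_and, subset_univ]
    rw [hfi, hch 2, show 2*n+2-2 = 2*n by omega, hP2card] at hsplit
    have hp : Nat.choose (2*n+1) 2 = Nat.choose (2*n) 1 + Nat.choose (2*n) 2 :=
      Nat.choose_succ_succ (2*n) 1
    rw [Nat.choose_one_right] at hp
    omega
  -- the set of crossing pairs
  set T2 : Finset (Finset V) := (Aᶜ : Finset V).biUnion
    (fun b => (A.filter (fun a => G.Adj a b)).image (fun a => ({a, b} : Finset V))) with hT2
  have hT2sub : T2 ⊆ ((univ : Finset V).powersetCard 2).filter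
      (fun s => ¬ ∀ u ∈ s, ∀ v ∈ s, ¬G.Adj u v) := by
    intro s hs
    rw [hT2, mem_biUnion] at hs
    obtain ⟨b, hb, hs⟩ := hs
    rw [mem_image] at hs
    obtain ⟨a, ha, rfl⟩ := hs
    rw [mem_filter] at ha
    have hab : a ≠ b := fun hc => (Finset.mem_compl.mp hb) (hc ▸ ha.1)
    rw [mem_filter, Finset.mem_powersetCard]
    refine ⟨⟨subset_univ _, ?_⟩, ?_⟩
    · rw [Finset.card_insert_of_notMem (by simpa using hab), Finset.card_singleton]
    · intro hind
      exact hind a (mem_insert_self _ _) b (mem_insert_of_mem (mem_singleton_self b)) ha.2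
  have hT2card : T2.card = ∑ b ∈ (Aᶜ : Finset V), (A.filter (fun a => G.Adj a b)).card := by
    rw [hT2, Finset.card_biUnion]
    · refine Finset.sum_congr rfl (fun b hb => ?_)
      apply Finset.card_image_of_injOn
      intro a ha a' ha' heq
      have heq' : ({a, b} : Finset V) = {a', b} := heq
      have : a' ∈ ({a, b} : Finset V) := by rw [heq']; exact mem_insert_self _ _
      rcases mem_insert.mp this with h' | h'
      · exact h'.symm
      · rw [mem_singleton] at h'
        exact absurd ((mem_filter.mp ha').1) (h' ▸ (Finset.mem_compl.mp hb))
    · intro b hb b' hb' hne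
      refine Finset.disjoint_left.mpr ?_
      intro s hs hs'
      rw [mem_image] at hs hs'
      obtain ⟨a, ha, rfl⟩ := hs
      obtain ⟨a', ha', heq⟩ := hs'
      have heq' : ({a', b'} : Finset V) = {a, b} := heq
      have hbmem : b ∈ ({a', b'} : Finset V) := by
        rw [heq']; exact mem_insert_of_mem (mem_singleton_self b)
      rcases mem_insert.mp hbmem with h' | h'
      · exact (Finset.mem_compl.mp hb) (h' ▸ (mem_filter.mp ha').1)
      · rw [mem_singleton] at h'
        exact hne h'
  have hsum_eq : ∑ b ∈ (Aᶜ : Finset V), (A.filter (fun a => G.Adj a b)).card = 2*n := by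
    have hge : (Aᶜ : Finset V).card • 2 ≤
        ∑ b ∈ (Aᶜ : Finset V), (A.filter (fun a => G.Adj a b)).card :=
      Finset.card_nsmul_le_sum _ _ _ hdAge
    rw [hBcard, smul_eq_mul] at hge
    have hle : T2.card ≤ 2*n := hnon2 ▸ card_le_card hT2sub
    rw [hT2card] at hle
    omega
  have hdA2 : ∀ b ∈ (Aᶜ : Finset V), (A.filter (fun a => G.Adj a b)).card = 2 := by
    intro b hb
    by_contra hne2
    have h3 : 3 ≤ (A.filter (fun a => G.Adj a b)).card := by
      have := hdAge b hb
      omega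
    have e1 : (A.filter (fun a => G.Adj a b)).card
        + ∑ x ∈ (Aᶜ : Finset V).erase b, (A.filter (fun a => G.Adj a x)).card
        = ∑ x ∈ (Aᶜ : Finset V), (A.filter (fun a => G.Adj a x)).card :=
      Finset.add_sum_erase (Aᶜ : Finset V) (fun x => (A.filter (fun a => G.Adj a x)).card) hb
    have hge : ((Aᶜ : Finset V).erase b).card • 2 ≤
        ∑ x ∈ (Aᶜ : Finset V).erase b, (A.filter (fun a => G.Adj a x)).card :=
      Finset.card_nsmul_le_sum _ _ _ (fun x hx => hdAge x (mem_of_mem_erase hx))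
    rw [Finset.card_erase_of_mem hb, hBcard, smul_eq_mul] at hge
    rw [hsum_eq] at e1
    omega
  have hT2eq : T2 = ((univ : Finset V).powersetCard 2).filter
      (fun s => ¬ ∀ u ∈ s, ∀ v ∈ s, ¬G.Adj u v) :=
    Finset.eq_of_subset_of_card_le hT2sub (by rw [hnon2, hT2card, hsum_eq])
  -- every edge crosses between A and Aᶜ
  have hcross : ∀ {u v : V}, G.Adj u v → (u ∈ A ↔ v ∉ A) := by
    intro u v huv
    have hs2 : ({u, v} : Finset V) ∈ T2 := by
      rw [hT2eq, mem_filter, Finset.mem_powersetCard]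
      refine ⟨⟨subset_univ _, ?_⟩, ?_⟩
      · rw [Finset.card_insert_of_notMem (by simpa using huv.ne), Finset.card_singleton]
      · intro hind
        exact hind u (mem_insert_self _ _) v (mem_insert_of_mem (mem_singleton_self v)) huv
    rw [hT2, mem_biUnion] at hs2
    obtain ⟨b, hb, hs2⟩ := hs2
    rw [mem_image] at hs2
    obtain ⟨a, ha, heq⟩ := hs2
    have heq' : ({a, b} : Finset V) = {u, v} := heq
    rw [mem_filter] at ha
    have hu' : u = a ∨ u = b := by
      have : u ∈ ({a, b} : Finset V) := by rw [heq']; exact mem_insert_self _ _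
      simpa using this
    have hv' : v = a ∨ v = b := by
      have : v ∈ ({a, b} : Finset V) := by
        rw [heq']; exact mem_insert_of_mem (mem_singleton_self v)
      simpa using this
    rcases hu' with rfl | rfl <;> rcases hv' with rfl | rfl
    · exact absurd rfl huv.ne
    · exact iff_of_true ha.1 (Finset.mem_compl.mp hb)
    · exact iff_of_false (Finset.mem_compl.mp hb) (fun hc => hc ha.1)
    · exact absurd rfl huv.ne
  have hBind : ∀ u v : V, u ∉ A → v ∉ A → ¬G.Adj u v :=
    fun u v hu hv huv => hu ((hcross huv).mpr hv)
  have hext : ∀ T : Finset V, T ⊆ Aᶜ → T.Nonempty → T.card + 1 ≤ (NA T).card :=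
    fun T h1' h2' => hext0 T h1' h2'
      (fun u hu v hv => hBind u v (Finset.mem_compl.mp (h1' hu)) (Finset.mem_compl.mp (h1' hv)))
  -- every vertex of A has a neighbour outside A
  have hNAB : NA (Aᶜ : Finset V) = A := by
    have h1' : (Aᶜ : Finset V).Nonempty := by
      rw [← Finset.card_pos, hBcard]; omega
    refine Finset.eq_of_subset_of_card_le (hNAsubA _) ?_
    rw [hAcard]
    have := hext (Aᶜ : Finset V) (subset_refl _) h1'
    rw [hBcard] at this
    exact this
  have haB : ∀ a ∈ A, ∃ b, b ∉ A ∧ G.Adj a b := by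
    intro a ha
    rw [← hNAB, hNA, mem_filter] at ha
    obtain ⟨-, b, hb, hadj⟩ := ha
    exact ⟨b, Finset.mem_compl.mp hb, hadj⟩
  -- connectivity
  have hpre : G.Preconnected := by
    haveI : Fintype G.ConnectedComponent := Fintype.ofFinite _
    have hAsum : A.card = ∑ c ∈ (univ : Finset G.ConnectedComponent),
        (A.filter (fun a => G.connectedComponentMk a = c)).card :=
      Finset.card_eq_sum_card_fiberwise (fun x _ => mem_univ _)
    have hBsum : (Aᶜ : Finset V).card = ∑ c ∈ (univ : Finset G.ConnectedComponent),
        ((Aᶜ : Finset V).filter (fun b => G.connectedComponentMk b = c)).card :=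
      Finset.card_eq_sum_card_fiberwise (fun x _ => mem_univ _)
    have hper : ∀ c : G.ConnectedComponent,
        ((Aᶜ : Finset V).filter (fun b => G.connectedComponentMk b = c)).card + 1 ≤
        (A.filter (fun a => G.connectedComponentMk a = c)).card := by
      intro c
      set Bc := (Aᶜ : Finset V).filter (fun b => G.connectedComponentMk b = c) with hBc
      have hBcne : Bc.Nonempty := by
        obtain ⟨x, hx⟩ := c.exists_rep
        by_cases hxA : x ∈ A
        · obtain ⟨b, hb, hadj⟩ := haB x hxA
          refine ⟨b, ?_⟩
          rw [hBc, mem_filter]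
          refine ⟨Finset.mem_compl.mpr hb, ?_⟩
          rw [← hx]
          exact ConnectedComponent.sound hadj.symm.reachable
        · exact ⟨x, by rw [hBc, mem_filter]; exact ⟨Finset.mem_compl.mpr hxA, hx⟩⟩
      have h1' := hext Bc (filter_subset _ _) hBcne
      have h2' : NA Bc ⊆ A.filter (fun a => G.connectedComponentMk a = c) := by
        intro a ha
        rw [hNA, mem_filter] at ha
        obtain ⟨haA, b, hb, hadj⟩ := ha
        rw [hBc, mem_filter] at hb
        rw [mem_filter]
        refine ⟨haA, ?_⟩
        rw [← hb.2]
        exact ConnectedComponent.sound hadj.reachable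
      exact le_trans h1' (card_le_card h2')
    have hcount : n + Fintype.card G.ConnectedComponent ≤ n + 1 := by
      have e1 : Fintype.card G.ConnectedComponent
          = ∑ _c ∈ (univ : Finset G.ConnectedComponent), 1 := by
        rw [Finset.sum_const, smul_eq_mul, mul_one, Finset.card_univ]
      calc n + Fintype.card G.ConnectedComponent
          = ∑ c ∈ (univ : Finset G.ConnectedComponent),
              (((Aᶜ : Finset V).filter (fun b => G.connectedComponentMk b = c)).card + 1) := by
            rw [Finset.sum_add_distrib, ← hBsum, hBcard, ← e1]
        _ ≤ ∑ c ∈ (univ : Finset G.ConnectedComponent),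
              (A.filter (fun a => G.connectedComponentMk a = c)).card :=
            Finset.sum_le_sum (fun c _ => hper c)
        _ = n + 1 := by rw [← hAsum, hAcard]
    have hcc : Fintype.card G.ConnectedComponent ≤ 1 := by omega
    intro u v
    exact ConnectedComponent.exact (Fintype.card_le_one_iff.mp hcc _ _)
  -- counting independent sets of size n : the family 𝒯
  set 𝒯 : Finset (Finset V) := ((Aᶜ : Finset V).powerset.filter
      (fun T => T.Nonempty ∧ (NA T).card = T.card + 1)) with h𝒯
  have h𝒯card : 𝒯.card = Nat.choose (n+1) 2 := by
    have hFkn : (Fk n).card = Nat.choose (n+2) 2 := by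
      rw [hch n, show 2*n+2-n = n+2 by omega,
        ← Nat.choose_symm (show n ≤ n+2 by omega), show n+2-n = 2 by omega]
    have hsplit := Finset.card_filter_add_card_filter_not
      (s := Fk n) (p := fun s => s ⊆ A)
    have hSnAcard : ((Fk n).filter (fun s => s ⊆ A)).card = n+1 := by
      have hSnA : (Fk n).filter (fun s => s ⊆ A) = A.powersetCard n := by
        ext s
        rw [hFk]
        simp only [mem_filter, mem_univ, true_and, Finset.mem_powersetCard]
        constructor
        · rintro ⟨⟨hc, -⟩, hsub⟩; exact ⟨hsub, hc⟩
        · rintro ⟨hsub, hc⟩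
          exact ⟨⟨hc, fun u hu v hv => hAindep u (hsub hu) v (hsub hv)⟩, hsub⟩
      rw [hSnA, Finset.card_powersetCard, hAcard,
        ← Nat.choose_symm (show n ≤ n+1 by omega), show n+1-n = 1 by omega,
        Nat.choose_one_right]
    have key : ∀ s ∈ (Fk n).filter (fun s => ¬ s ⊆ A),
        (s ∩ Aᶜ ∈ 𝒯) ∧ ((s ∩ Aᶜ) ∪ (A \ NA (s ∩ Aᶜ)) = s) := by
      intro s hs
      rw [mem_filter, hFk, mem_filter] at hs
      obtain ⟨⟨-, hsc, hsi⟩, hns⟩ := hs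
      set T := s ∩ Aᶜ with hTdef
      have hTB : T ⊆ Aᶜ := inter_subset_right
      have hTne : T.Nonempty := by
        obtain ⟨x, hxs, hxA⟩ := Finset.not_subset.mp hns
        exact ⟨x, mem_inter.mpr ⟨hxs, Finset.mem_compl.mpr hxA⟩⟩
      have hsplit2 : (s ∩ A).card + T.card = s.card := by
        have e1 : s.filter (· ∈ A) = s ∩ A := Finset.filter_mem_eq_inter
        have e2 : s.filter (fun x => ¬ x ∈ A) = s ∩ Aᶜ := by
          ext x
          simp only [mem_filter, mem_inter, Finset.mem_compl]
        rw [← e1, hTdef, ← e2]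
        exact Finset.card_filter_add_card_filter_not (p := (· ∈ A))
      have hR : s ∩ A ⊆ A \ NA T := by
        intro r hr
        obtain ⟨hrs, hrA⟩ := mem_inter.mp hr
        rw [mem_sdiff]
        refine ⟨hrA, fun hc => ?_⟩
        rw [hNA, mem_filter] at hc
        obtain ⟨-, b, hb, hadj⟩ := hc
        exact hsi r hrs b (mem_inter.mp hb).1 hadj
      have hTex := hext T hTB hTne
      have hNAle : (NA T).card ≤ n+1 := hAcard ▸ card_le_card (hNAsubA T)
      have hsd : (A \ NA T).card = n+1 - (NA T).card := by
        rw [Finset.card_sdiff_of_subset (hNAsubA T), hAcard]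
      have hRle : (s ∩ A).card ≤ n+1 - (NA T).card := hsd ▸ card_le_card hR
      have hNAeq : (NA T).card = T.card + 1 := by omega
      have hReq : s ∩ A = A \ NA T := by
        refine Finset.eq_of_subset_of_card_le hR ?_
        omega
      refine ⟨?_, ?_⟩
      · rw [h𝒯, mem_filter]
        exact ⟨mem_powerset.mpr hTB, hTne, hNAeq⟩
      · rw [← hReq, hTdef]
        ext x
        simp only [mem_union, mem_inter, Finset.mem_compl]
        by_cases hxA : x ∈ A <;> tauto
    have hj : ∀ T ∈ 𝒯, T ∪ (A \ NA T) ∈ (Fk n).filter (fun s => ¬ s ⊆ A) := by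
      intro T hT
      rw [h𝒯, mem_filter, mem_powerset] at hT
      obtain ⟨hTB, hTne, hNAeq⟩ := hT
      have hdisj : Disjoint T (A \ NA T) := by
        refine Finset.disjoint_left.mpr ?_
        intro x hxT hxA
        exact (Finset.mem_compl.mp (hTB hxT)) (Finset.mem_sdiff.mp hxA).1
      have hTle : T.card ≤ n := hBcard ▸ card_le_card hTB
      have hind : ∀ u ∈ T ∪ (A \ NA T), ∀ v ∈ T ∪ (A \ NA T), ¬G.Adj u v := by
        intro u hu v hv
        rw [Finset.mem_union] at hu hv
        rcases hu with hu | hu <;> rcases hv with hv | hv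
        · exact hBind u v (Finset.mem_compl.mp (hTB hu)) (Finset.mem_compl.mp (hTB hv))
        · intro hadj
          have : v ∈ NA T := by
            rw [hNA]; exact mem_filter.mpr ⟨(mem_sdiff.mp hv).1, u, hu, hadj.symm⟩
          exact (mem_sdiff.mp hv).2 this
        · intro hadj
          have : u ∈ NA T := by
            rw [hNA]; exact mem_filter.mpr ⟨(mem_sdiff.mp hu).1, v, hv, hadj⟩
          exact (mem_sdiff.mp hu).2 this
        · exact hAindep u (mem_sdiff.mp hu).1 v (mem_sdiff.mp hv).1
      have hcardu : (T ∪ (A \ NA T)).card = n := by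
        rw [Finset.card_union_of_disjoint hdisj, Finset.card_sdiff_of_subset (hNAsubA T), hAcard, hNAeq]
        omega
      rw [mem_filter, hFk, mem_filter]
      refine ⟨⟨mem_univ _, hcardu, hind⟩, ?_⟩
      obtain ⟨x, hx⟩ := hTne
      exact Finset.not_subset.mpr ⟨x, Finset.mem_union_left _ hx,
        Finset.mem_compl.mp (hTB hx)⟩
    have hSnB : ((Fk n).filter (fun s => ¬ s ⊆ A)).card = 𝒯.card := by
      refine Finset.card_bij' (fun s _ => s ∩ Aᶜ) (fun T _ => T ∪ (A \ NA T))
        (fun s hs => (key s hs).1) hj (fun s hs => (key s hs).2) ?_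
      intro T hT
      rw [h𝒯, mem_filter, mem_powerset] at hT
      ext x
      simp only [mem_inter, mem_union, mem_sdiff, Finset.mem_compl]
      constructor
      · rintro ⟨hx | ⟨hxA, -⟩, hxc⟩
        · exact hx
        · exact absurd hxA hxc
      · intro hx
        exact ⟨Or.inl hx, Finset.mem_compl.mp (hT.1 hx)⟩
    have hp : Nat.choose (n+2) 2 = Nat.choose (n+1) 1 + Nat.choose (n+1) 2 :=
      Nat.choose_succ_succ (n+1) 1
    rw [Nat.choose_one_right] at hp
    rw [hSnAcard, hSnB, hFkn] at hsplit
    omega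
  -- the endpoint map
  set Ψ : Finset V → Finset V :=
    fun T => (NA T).filter (fun a => (T.filter (fun b => G.Adj a b)).card = 1) with hΨ
  have PsiPath : ∀ u v : V, u ∈ A → v ∈ A → u ≠ v → ∃ T ∈ 𝒯, Ψ T = {u, v} := by
    intro u v huA hvA huv
    obtain ⟨p0⟩ := hpre u v
    obtain ⟨p, hp⟩ : ∃ p : G.Walk u v, p.IsPath := ⟨p0.toPath.val, p0.toPath.prop⟩
    have hpnil : ¬ p.Nil := by
      intro hc
      rw [SimpleGraph.Walk.nil_iff_support_eq] at hc
      have hv' := p.end_mem_support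
      rw [hc, List.mem_singleton] at hv'
      exact huv hv'.symm
    set T := (Aᶜ : Finset V).filter (· ∈ p.support) with hTdef
    have hTB : T ⊆ Aᶜ := filter_subset _ _
    have hTne : T.Nonempty := by
      obtain ⟨y, hy, hadj⟩ := walk_exists_adj p hpnil u p.start_mem_support
      exact ⟨y, by
        rw [hTdef]
        exact mem_filter.mpr ⟨Finset.mem_compl.mpr ((hcross hadj).mp huA), hy⟩⟩
    have hbnbr : ∀ b ∈ T, ∀ a : V, G.Adj a b → (a ∈ A ∧ a ∈ p.support) := by
      intro b hbT a hadj
      rw [hTdef, mem_filter] at hbT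
      obtain ⟨hbB, hbsup⟩ := hbT
      have hbA : b ∉ A := Finset.mem_compl.mp hbB
      have haA : a ∈ A := (hcross hadj).mpr hbA
      have hbu : b ≠ u := fun hc => hbA (hc ▸ huA)
      have hbv : b ≠ v := fun hc => hbA (hc ▸ hvA)
      obtain ⟨y, z, hy, hz, hyz, ay, az⟩ := walk_interior_two p hp b hbsup hbu hbv
      have hyA : y ∈ A := by
        by_contra hyA
        exact hbA ((hcross ay).mpr hyA)
      have hzA : z ∈ A := by
        by_contra hzA
        exact hbA ((hcross az).mpr hzA)
      have hsub : ({y, z} : Finset V) ⊆ A.filter (fun x => G.Adj x b) := by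
        intro x hx
        rcases mem_insert.mp hx with rfl | hx
        · exact mem_filter.mpr ⟨hyA, ay.symm⟩
        · rw [mem_singleton] at hx
          subst hx
          exact mem_filter.mpr ⟨hzA, az.symm⟩
      have heqf : ({y, z} : Finset V) = A.filter (fun x => G.Adj x b) := by
        refine Finset.eq_of_subset_of_card_le hsub ?_
        rw [hdA2 b hbB, Finset.card_insert_of_notMem (by simpa using hyz),
          Finset.card_singleton]
      have haf : a ∈ ({y, z} : Finset V) := by
        rw [heqf]
        exact mem_filter.mpr ⟨haA, hadj⟩
      have hasup : a ∈ p.support := by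
        rcases mem_insert.mp haf with rfl | haf
        · exact hy
        · rw [mem_singleton] at haf
          subst haf
          exact hz
      exact ⟨haA, hasup⟩
    have hNAT : NA T = A.filter (· ∈ p.support) := by
      ext a
      constructor
      · intro ha
        rw [hNA, mem_filter] at ha
        obtain ⟨haA, b, hbT, hadj⟩ := ha
        exact mem_filter.mpr ⟨haA, (hbnbr b hbT a hadj).2⟩
      · intro ha
        obtain ⟨haA, hasup⟩ := mem_filter.mp ha
        obtain ⟨y, hy, hadj⟩ := walk_exists_adj p hpnil a hasup
        have hyB : y ∉ A := (hcross hadj).mp haA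
        rw [hNA]
        refine mem_filter.mpr ⟨haA, y, ?_, hadj⟩
        rw [hTdef]
        exact mem_filter.mpr ⟨Finset.mem_compl.mpr hyB, hy⟩
    have hNATc : (NA T).card = T.card + 1 := by
      rw [hNAT]
      have halt := walk_alt A (fun {x y} h' => hcross h') p hp hvA
      rw [if_pos huA] at halt
      rw [hTdef]
      exact halt
    have hT𝒯 : T ∈ 𝒯 := by
      rw [h𝒯, mem_filter]
      exact ⟨mem_powerset.mpr hTB, hTne, hNATc⟩
    refine ⟨T, hT𝒯, ?_⟩
    have hdouble : ∑ a ∈ NA T, (T.filter (fun b => G.Adj a b)).card = 2 * T.card := by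
      have e1 : ∀ a : V, (T.filter (fun b => G.Adj a b)).card
          = ∑ b ∈ T, if G.Adj a b then 1 else 0 := fun a => Finset.card_filter _ _
      have e3 : ∀ b ∈ T, ((NA T).filter (fun a => G.Adj a b)).card = 2 := by
        intro b hb
        have heqf : (NA T).filter (fun a => G.Adj a b) = A.filter (fun a => G.Adj a b) := by
          ext a
          constructor
          · intro ha
            obtain ⟨haNA, hadj⟩ := mem_filter.mp ha
            exact mem_filter.mpr ⟨(hNAsubA T) haNA, hadj⟩
          · intro ha
            obtain ⟨haA, hadj⟩ := mem_filter.mp ha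
            refine mem_filter.mpr ⟨?_, hadj⟩
            rw [hNA]
            exact mem_filter.mpr ⟨haA, b, hb, hadj⟩
        rw [heqf]
        exact hdA2 b (hTB hb)
      calc ∑ a ∈ NA T, (T.filter (fun b => G.Adj a b)).card
          = ∑ a ∈ NA T, ∑ b ∈ T, ite (G.Adj a b) 1 0 :=
            Finset.sum_congr rfl (fun a _ => e1 a)
        _ = ∑ b ∈ T, ∑ a ∈ NA T, ite (G.Adj a b) 1 0 := Finset.sum_comm
        _ = ∑ b ∈ T, ((NA T).filter (fun a => G.Adj a b)).card :=
            Finset.sum_congr rfl (fun b _ => (Finset.card_filter _ _).symm)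
        _ = ∑ b ∈ T, 2 := Finset.sum_congr rfl e3
        _ = 2 * T.card := by rw [Finset.sum_const, smul_eq_mul, mul_comm]
    have huT : u ∈ NA T := by rw [hNAT]; exact mem_filter.mpr ⟨huA, p.start_mem_support⟩
    have hvT : v ∈ NA T := by rw [hNAT]; exact mem_filter.mpr ⟨hvA, p.end_mem_support⟩
    have hint : ∀ a ∈ NA T, a ≠ u → a ≠ v → 2 ≤ (T.filter (fun b => G.Adj a b)).card := by
      intro a ha hau hav
      rw [hNAT, mem_filter] at ha
      obtain ⟨haA, hasup⟩ := ha
      obtain ⟨y, z, hy, hz, hyz, ay, az⟩ := walk_interior_two p hp a hasup hau hav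
      have hyT : y ∈ T.filter (fun b => G.Adj a b) := by
        refine mem_filter.mpr ⟨?_, ay⟩
        rw [hTdef]
        exact mem_filter.mpr ⟨Finset.mem_compl.mpr ((hcross ay).mp haA), hy⟩
      have hzT : z ∈ T.filter (fun b => G.Adj a b) := by
        refine mem_filter.mpr ⟨?_, az⟩
        rw [hTdef]
        exact mem_filter.mpr ⟨Finset.mem_compl.mpr ((hcross az).mp haA), hz⟩
      calc 2 = ({y, z} : Finset V).card := by
            rw [Finset.card_insert_of_notMem (by simpa using hyz), Finset.card_singleton]
        _ ≤ (T.filter (fun b => G.Adj a b)).card := by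
            refine Finset.card_le_card ?_
            intro x hx
            rcases mem_insert.mp hx with rfl | hx
            · exact hyT
            · rw [mem_singleton] at hx
              subst hx
              exact hzT
    have hcu1 : 1 ≤ (T.filter (fun b => G.Adj u b)).card := by
      have hmem := huT
      rw [hNA, mem_filter] at hmem
      obtain ⟨-, b, hb, hadj⟩ := hmem
      exact Finset.card_pos.mpr ⟨b, mem_filter.mpr ⟨hb, hadj⟩⟩
    have hcv1 : 1 ≤ (T.filter (fun b => G.Adj v b)).card := by
      have hmem := hvT
      rw [hNA, mem_filter] at hmem
      obtain ⟨-, b, hb, hadj⟩ := hmem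
      exact Finset.card_pos.mpr ⟨b, mem_filter.mpr ⟨hb, hadj⟩⟩
    have hvR : v ∈ (NA T).erase u := mem_erase.mpr ⟨fun hc => huv hc.symm, hvT⟩
    set R := ((NA T).erase u).erase v with hRdef
    have e1 : (T.filter (fun b => G.Adj u b)).card
        + ∑ a ∈ (NA T).erase u, (T.filter (fun b => G.Adj a b)).card
        = ∑ a ∈ NA T, (T.filter (fun b => G.Adj a b)).card :=
      Finset.add_sum_erase _ (fun a => (T.filter (fun b => G.Adj a b)).card) huT
    have e2 : (T.filter (fun b => G.Adj v b)).card
        + ∑ a ∈ R, (T.filter (fun b => G.Adj a b)).card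
        = ∑ a ∈ (NA T).erase u, (T.filter (fun b => G.Adj a b)).card :=
      Finset.add_sum_erase _ (fun a => (T.filter (fun b => G.Adj a b)).card) hvR
    have hRlb : R.card • 2 ≤ ∑ a ∈ R, (T.filter (fun b => G.Adj a b)).card := by
      refine Finset.card_nsmul_le_sum _ _ _ ?_
      intro a ha
      exact hint a (mem_of_mem_erase (mem_of_mem_erase ha))
        (mem_erase.mp (mem_of_mem_erase ha)).1 (mem_erase.mp ha).1
    have hRcard : R.card = T.card - 1 := by
      rw [hRdef, Finset.card_erase_of_mem hvR, Finset.card_erase_of_mem huT, hNATc]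
      omega
    have hTpos : 1 ≤ T.card := Finset.card_pos.mpr hTne
    have hcuv : (T.filter (fun b => G.Adj u b)).card = 1
        ∧ (T.filter (fun b => G.Adj v b)).card = 1 := by
      rw [smul_eq_mul] at hRlb
      omega
    rw [hΨ]
    ext a
    simp only [mem_filter, mem_insert, mem_singleton]
    constructor
    · rintro ⟨haNA, hc1⟩
      by_contra hor
      push_neg at hor
      have := hint a haNA hor.1 hor.2
      omega
    · rintro (rfl | rfl)
      · exact ⟨huT, hcuv.1⟩
      · exact ⟨hvT, hcuv.2⟩
  -- vertices of A have at most two neighbours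
  have hdegA : ∀ a ∈ A, ((Aᶜ : Finset V).filter (fun b => G.Adj a b)).card ≤ 2 := by
    intro a haA
    by_contra hc
    push_neg at hc
    obtain ⟨t, hts, htc⟩ := Finset.exists_subset_card_eq
      (s := (Aᶜ : Finset V).filter (fun b => G.Adj a b)) (n := 3) (by omega)
    obtain ⟨b1, b2, b3, h12, h13, h23, rfl⟩ := Finset.card_eq_three.mp htc
    have hb : ∀ x ∈ ({b1, b2, b3} : Finset V), x ∈ (Aᶜ : Finset V) ∧ G.Adj a x := by
      intro x hx
      have := hts hx
      rw [mem_filter] at this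
      exact this
    have m1 : b1 ∈ ({b1, b2, b3} : Finset V) := mem_insert_self _ _
    have m2 : b2 ∈ ({b1, b2, b3} : Finset V) := mem_insert_of_mem (mem_insert_self _ _)
    have m3 : b3 ∈ ({b1, b2, b3} : Finset V) :=
      mem_insert_of_mem (mem_insert_of_mem (mem_singleton_self _))
    have hb1 := hb b1 m1
    have hb2 := hb b2 m2
    have hb3 := hb b3 m3
    have hother : ∀ b, b ∈ (Aᶜ : Finset V) → G.Adj a b →
        ∃ a', a' ≠ a ∧ a' ∈ A ∧ G.Adj a' b ∧ A.filter (fun x => G.Adj x b) = {a, a'} := by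
      intro b hbB hadj
      have h2 : (A.filter (fun x => G.Adj x b)).card = 2 := hdA2 b hbB
      have haf : a ∈ A.filter (fun x => G.Adj x b) := mem_filter.mpr ⟨haA, hadj⟩
      have h1' : ((A.filter (fun x => G.Adj x b)).erase a).card = 1 := by
        rw [Finset.card_erase_of_mem haf, h2]
      obtain ⟨a', ha'⟩ := Finset.card_eq_one.mp h1'
      have ha'mem : a' ∈ (A.filter (fun x => G.Adj x b)).erase a := by
        rw [ha']
        exact mem_singleton_self _
      obtain ⟨ha'ne, ha'f⟩ := mem_erase.mp ha'mem
      obtain ⟨ha'A, ha'adj⟩ := mem_filter.mp ha'f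
      refine ⟨a', ha'ne, ha'A, ha'adj, ?_⟩
      have hie := Finset.insert_erase haf
      rw [ha'] at hie
      exact hie.symm
    obtain ⟨a1, ha1ne, ha1A, ha1adj, hf1⟩ := hother b1 hb1.1 hb1.2
    obtain ⟨a2, ha2ne, ha2A, ha2adj, hf2⟩ := hother b2 hb2.1 hb2.2
    obtain ⟨a3, ha3ne, ha3A, ha3adj, hf3⟩ := hother b3 hb3.1 hb3.2
    have hpairne : ∀ bi bj ai aj, bi ≠ bj → bi ∈ (Aᶜ : Finset V) → bj ∈ (Aᶜ : Finset V) →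
        A.filter (fun x => G.Adj x bi) = {a, ai} →
        A.filter (fun x => G.Adj x bj) = {a, aj} → ai ≠ aj := by
      intro bi bj ai aj hne hbi hbj hfi hfj heq
      subst heq
      have hT'sub : ({bi, bj} : Finset V) ⊆ Aᶜ := by
        intro x hx
        rcases mem_insert.mp hx with rfl | hx
        · exact hbi
        · rw [mem_singleton] at hx
          subst hx
          exact hbj
      have hT'card : ({bi, bj} : Finset V).card = 2 := by
        rw [Finset.card_insert_of_notMem (by simpa using hne), Finset.card_singleton]
      have h3 := hext {bi, bj} hT'sub ⟨bi, mem_insert_self _ _⟩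
      rw [hT'card] at h3
      have hsub : NA {bi, bj} ⊆ {a, ai} := by
        intro x hx
        rw [hNA, mem_filter] at hx
        obtain ⟨hxA, b, hbmem, hadj⟩ := hx
        rcases mem_insert.mp hbmem with rfl | hbmem
        · have hxf : x ∈ A.filter (fun y => G.Adj y b) := mem_filter.mpr ⟨hxA, hadj⟩
          rw [hfi] at hxf
          exact hxf
        · rw [mem_singleton] at hbmem
          subst hbmem
          have hxf : x ∈ A.filter (fun y => G.Adj y b) := mem_filter.mpr ⟨hxA, hadj⟩
          rw [hfj] at hxf
          exact hxf
      have hle := card_le_card hsub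
      have hle2 : ({a, ai} : Finset V).card ≤ 2 :=
        le_trans (Finset.card_insert_le _ _) (by rw [Finset.card_singleton])
      omega
    have h12' : a1 ≠ a2 := hpairne b1 b2 a1 a2 h12 hb1.1 hb2.1 hf1 hf2
    have h13' : a1 ≠ a3 := hpairne b1 b3 a1 a3 h13 hb1.1 hb3.1 hf1 hf3
    have h23' : a2 ≠ a3 := hpairne b2 b3 a2 a3 h23 hb2.1 hb3.1 hf2 hf3
    have hTstarsub : ({b1, b2, b3} : Finset V) ⊆ Aᶜ := fun x hx => (hb x hx).1
    have hNAstar : NA {b1, b2, b3} = {a, a1, a2, a3} := by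
      ext x
      simp only [mem_insert, mem_singleton]
      constructor
      · intro hx
        rw [hNA, mem_filter] at hx
        obtain ⟨hxA, b, hbmem, hadj⟩ := hx
        have hxf : x ∈ A.filter (fun y => G.Adj y b) := mem_filter.mpr ⟨hxA, hadj⟩
        simp only [mem_insert, mem_singleton] at hbmem
        rcases hbmem with rfl | rfl | rfl
        · rw [hf1] at hxf
          have := mem_insert.mp hxf
          simp only [mem_singleton] at this
          tauto
        · rw [hf2] at hxf
          have := mem_insert.mp hxf
          simp only [mem_singleton] at this
          tauto
        · rw [hf3] at hxf
          have := mem_insert.mp hxf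
          simp only [mem_singleton] at this
          tauto
      · intro hx
        rw [hNA, mem_filter]
        rcases hx with rfl | rfl | rfl | rfl
        · exact ⟨haA, b1, m1, hb1.2⟩
        · exact ⟨ha1A, b1, m1, ha1adj⟩
        · exact ⟨ha2A, b2, m2, ha2adj⟩
        · exact ⟨ha3A, b3, m3, ha3adj⟩
    have hstarcard : (NA {b1, b2, b3}).card = 4 := by
      rw [hNAstar]
      have n1 : a ∉ ({a1, a2, a3} : Finset V) := by
        simp only [mem_insert, mem_singleton]
        push_neg
        exact ⟨fun hc => ha1ne hc.symm, fun hc => ha2ne hc.symm, fun hc => ha3ne hc.symm⟩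
      have n2 : a1 ∉ ({a2, a3} : Finset V) := by
        simp only [mem_insert, mem_singleton]
        push_neg
        exact ⟨h12', h13'⟩
      rw [Finset.card_insert_of_notMem n1, Finset.card_insert_of_notMem n2,
        Finset.card_insert_of_notMem (by simpa using h23'), Finset.card_singleton]
    have hTstar𝒯 : ({b1, b2, b3} : Finset V) ∈ 𝒯 := by
      rw [h𝒯, mem_filter]
      refine ⟨mem_powerset.mpr hTstarsub, ⟨b1, mem_insert_self _ _⟩, ?_⟩
      rw [hstarcard, htc]
    have hfiltuniq : ∀ ai bi : V, ai ∈ A → G.Adj ai bi → bi ∈ ({b1, b2, b3} : Finset V) →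
        (∀ bj, bj ∈ ({b1, b2, b3} : Finset V) → G.Adj ai bj → bj = bi) →
        (({b1, b2, b3} : Finset V).filter (fun b => G.Adj ai b)).card = 1 := by
      intro ai bi haiA haiadj hbimem huniq
      have heqf : ({b1, b2, b3} : Finset V).filter (fun b => G.Adj ai b) = {bi} := by
        ext x
        rw [mem_filter, mem_singleton]
        constructor
        · rintro ⟨hx1, hx2⟩
          exact huniq x hx1 hx2
        · rintro rfl
          exact ⟨hbimem, haiadj⟩
      rw [heqf, Finset.card_singleton]
    have hu1 : ∀ bj, bj ∈ ({b1, b2, b3} : Finset V) → G.Adj a1 bj → bj = b1 := by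
      intro bj hbj hadj
      have hbj' : bj = b1 ∨ bj = b2 ∨ bj = b3 := by
        rw [mem_insert, mem_insert, mem_singleton] at hbj
        exact hbj
      rcases hbj' with rfl | rfl | rfl
      · rfl
      · exfalso
        have hxf : a1 ∈ A.filter (fun y => G.Adj y bj) := mem_filter.mpr ⟨ha1A, hadj⟩
        rw [hf2] at hxf
        have := mem_insert.mp hxf
        simp only [mem_singleton] at this
        rcases this with hc | hc
        · exact ha1ne hc
        · exact h12' hc
      · exfalso
        have hxf : a1 ∈ A.filter (fun y => G.Adj y bj) := mem_filter.mpr ⟨ha1A, hadj⟩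
        rw [hf3] at hxf
        have := mem_insert.mp hxf
        simp only [mem_singleton] at this
        rcases this with hc | hc
        · exact ha1ne hc
        · exact h13' hc
    have hu2 : ∀ bj, bj ∈ ({b1, b2, b3} : Finset V) → G.Adj a2 bj → bj = b2 := by
      intro bj hbj hadj
      have hbj' : bj = b1 ∨ bj = b2 ∨ bj = b3 := by
        rw [mem_insert, mem_insert, mem_singleton] at hbj
        exact hbj
      rcases hbj' with rfl | rfl | rfl
      · exfalso
        have hxf : a2 ∈ A.filter (fun y => G.Adj y bj) := mem_filter.mpr ⟨ha2A, hadj⟩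
        rw [hf1] at hxf
        have := mem_insert.mp hxf
        simp only [mem_singleton] at this
        rcases this with hc | hc
        · exact ha2ne hc
        · exact h12' hc.symm
      · rfl
      · exfalso
        have hxf : a2 ∈ A.filter (fun y => G.Adj y bj) := mem_filter.mpr ⟨ha2A, hadj⟩
        rw [hf3] at hxf
        have := mem_insert.mp hxf
        simp only [mem_singleton] at this
        rcases this with hc | hc
        · exact ha2ne hc
        · exact h23' hc
    have hu3 : ∀ bj, bj ∈ ({b1, b2, b3} : Finset V) → G.Adj a3 bj → bj = b3 := by
      intro bj hbj hadj
      have hbj' : bj = b1 ∨ bj = b2 ∨ bj = b3 := by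
        rw [mem_insert, mem_insert, mem_singleton] at hbj
        exact hbj
      rcases hbj' with rfl | rfl | rfl
      · exfalso
        have hxf : a3 ∈ A.filter (fun y => G.Adj y bj) := mem_filter.mpr ⟨ha3A, hadj⟩
        rw [hf1] at hxf
        have := mem_insert.mp hxf
        simp only [mem_singleton] at this
        rcases this with hc | hc
        · exact ha3ne hc
        · exact h13' hc.symm
      · exfalso
        have hxf : a3 ∈ A.filter (fun y => G.Adj y bj) := mem_filter.mpr ⟨ha3A, hadj⟩
        rw [hf2] at hxf
        have := mem_insert.mp hxf
        simp only [mem_singleton] at this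
        rcases this with hc | hc
        · exact ha3ne hc
        · exact h23' hc.symm
      · rfl
    have hΨstar : Ψ {b1, b2, b3} = {a1, a2, a3} := by
      rw [hΨ]
      ext x
      simp only [mem_filter, mem_insert, mem_singleton]
      constructor
      · rintro ⟨hxNA, hc1⟩
        have hx4 : x = a ∨ x = a1 ∨ x = a2 ∨ x = a3 := by
          rw [hNAstar, mem_insert, mem_insert, mem_insert, mem_singleton] at hxNA
          exact hxNA
        rcases hx4 with rfl | rfl | rfl | rfl
        · exfalso
          have hfa : ({b1, b2, b3} : Finset V).filter (fun b => G.Adj x b)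
              = {b1, b2, b3} := Finset.filter_eq_self.mpr (fun b hb' => (hb b hb').2)
          rw [hfa, htc] at hc1
          omega
        · tauto
        · tauto
        · tauto
      · intro hx
        rcases hx with rfl | rfl | rfl
        · exact ⟨by rw [hNAstar]; exact mem_insert_of_mem (mem_insert_self _ _),
            hfiltuniq x b1 ha1A ha1adj m1 hu1⟩
        · exact ⟨by rw [hNAstar]; exact mem_insert_of_mem (mem_insert_of_mem
            (mem_insert_self _ _)), hfiltuniq x b2 ha2A ha2adj m2 hu2⟩
        · exact ⟨by rw [hNAstar]; exact mem_insert_of_mem (mem_insert_of_mem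
            (mem_insert_of_mem (mem_singleton_self _))), hfiltuniq x b3 ha3A ha3adj m3 hu3⟩
    have hΨstarcard : (Ψ {b1, b2, b3}).card = 3 := by
      rw [hΨstar]
      have n2 : a1 ∉ ({a2, a3} : Finset V) := by
        simp only [mem_insert, mem_singleton]
        push_neg
        exact ⟨h12', h13'⟩
      rw [Finset.card_insert_of_notMem n2,
        Finset.card_insert_of_notMem (by simpa using h23'), Finset.card_singleton]
    have hpairsub : insert (Ψ {b1, b2, b3}) (A.powersetCard 2) ⊆ 𝒯.image Ψ := by
      intro x hx
      rcases mem_insert.mp hx with rfl | hx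
      · exact mem_image.mpr ⟨{b1, b2, b3}, hTstar𝒯, rfl⟩
      · rw [Finset.mem_powersetCard] at hx
        obtain ⟨hsubA, hc2⟩ := hx
        obtain ⟨x1, x2, hx12, rfl⟩ := Finset.card_eq_two.mp hc2
        obtain ⟨T, hT, hΨT⟩ := PsiPath x1 x2 (hsubA (mem_insert_self _ _))
          (hsubA (mem_insert_of_mem (mem_singleton_self _))) hx12
        exact mem_image.mpr ⟨T, hT, hΨT⟩
    have hnotin : Ψ {b1, b2, b3} ∉ A.powersetCard 2 := by
      intro hcmem
      rw [Finset.mem_powersetCard] at hcmem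
      have := hcmem.2
      rw [hΨstarcard] at this
      omega
    have hfin : Nat.choose (n+1) 2 + 1 ≤ 𝒯.card := by
      calc Nat.choose (n+1) 2 + 1 = (insert (Ψ {b1, b2, b3}) (A.powersetCard 2)).card := by
            rw [Finset.card_insert_of_notMem hnotin, Finset.card_powersetCard, hAcard]
        _ ≤ (𝒯.image Ψ).card := card_le_card hpairsub
        _ ≤ 𝒯.card := Finset.card_image_le
    rw [h𝒯card] at hfin
    omega
  -- final assembly
  have hnbrA : ∀ a ∈ A, G.neighborFinset a = (Aᶜ : Finset V).filter (fun b => G.Adj a b) := by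
    intro a ha
    ext x
    rw [mem_neighborFinset, mem_filter, Finset.mem_compl]
    exact ⟨fun h' => ⟨(hcross h').mp ha, h'⟩, fun h' => h'.2⟩
  have hnbrB : ∀ b ∈ (Aᶜ : Finset V), G.neighborFinset b = A.filter (fun a => G.Adj a b) := by
    intro b hb
    ext x
    rw [mem_neighborFinset, mem_filter]
    constructor
    · intro h'
      have hxA : x ∈ A := by
        by_contra hxA
        exact (Finset.mem_compl.mp hb) ((hcross h').mpr hxA)
      exact ⟨hxA, h'.symm⟩
    · exact fun h' => h'.2.symm
  have hdeg : ∀ v, G.degree v ≤ 2 := by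
    intro v
    rw [← card_neighborFinset_eq_degree]
    by_cases hv : v ∈ A
    · rw [hnbrA v hv]; exact hdegA v hv
    · rw [hnbrB v (Finset.mem_compl.mpr hv), hdA2 v (Finset.mem_compl.mpr hv)]
  -- an endpoint
  have hsums : ∑ a ∈ A, ((Aᶜ : Finset V).filter (fun b => G.Adj a b)).card = 2*n := by
    have e1 : ∀ a : V, ((Aᶜ : Finset V).filter (fun b => G.Adj a b)).card
        = ∑ b ∈ (Aᶜ : Finset V), if G.Adj a b then 1 else 0 := fun a => Finset.card_filter _ _
    have e2 : ∀ b : V, (A.filter (fun a => G.Adj a b)).card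
        = ∑ a ∈ A, if G.Adj a b then 1 else 0 := fun b => Finset.card_filter _ _
    calc ∑ a ∈ A, ((Aᶜ : Finset V).filter (fun b => G.Adj a b)).card
        = ∑ a ∈ A, ∑ b ∈ (Aᶜ : Finset V), if G.Adj a b then 1 else 0 :=
          Finset.sum_congr rfl (fun a _ => e1 a)
      _ = ∑ b ∈ (Aᶜ : Finset V), ∑ a ∈ A, if G.Adj a b then 1 else 0 := Finset.sum_comm
      _ = ∑ b ∈ (Aᶜ : Finset V), (A.filter (fun a => G.Adj a b)).card :=
          Finset.sum_congr rfl (fun b _ => (e2 b).symm)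
      _ = 2*n := hsum_eq
  have hex0 : ∃ a₀ ∈ A, ((Aᶜ : Finset V).filter (fun b => G.Adj a₀ b)).card ≤ 1 := by
    by_contra hc
    push_neg at hc
    have hge : A.card • 2 ≤ ∑ a ∈ A, ((Aᶜ : Finset V).filter (fun b => G.Adj a b)).card :=
      Finset.card_nsmul_le_sum _ _ _ (fun a ha => hc a ha)
    rw [hAcard, smul_eq_mul, hsums] at hge
    omega
  obtain ⟨a₀, ha₀A, ha₀le⟩ := hex0
  have ha₀deg : G.degree a₀ = 1 := by
    have h1' : 1 ≤ ((Aᶜ : Finset V).filter (fun b => G.Adj a₀ b)).card := by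
      obtain ⟨b, hbB, hadj⟩ := haB a₀ ha₀A
      exact Finset.card_pos.mpr ⟨b, mem_filter.mpr ⟨Finset.mem_compl.mpr hbB, hadj⟩⟩
    rw [← card_neighborFinset_eq_degree, hnbrA a₀ ha₀A]
    omega
  obtain ⟨iso⟩ := iso_path (2*n-1) (by omega : Fintype.card V = (2*n-1) + 2) hpre hdeg a₀ ha₀deg
  exact ⟨(show (2*n-1)+2 = 2*n+1 by omega) ▸ iso⟩
end

section
/- Let n ≥ 4 and let G be a finite simple graph that is independence equivalent to the cycle C_n. Then the number of triangles in G is at least the number of vertices of G whose degree is neither 1 nor 2; that is, t(G) ≥ |{v ∈ V(G) : deg(v) ∉ {1,2}}|. -/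
open SimpleGraph Polynomial Finset

/-- The number of triangles (sets of three pairwise adjacent vertices) in `G`. -/
noncomputable def triangleCount {V : Type*} [Fintype V] (G : SimpleGraph V) : ℕ :=
  Nat.card {s : Finset V // s.card = 3 ∧ ∀ u ∈ s, ∀ v ∈ s, u ≠ v → G.Adj u v}

/-!
Counting the 2- and 3-subsets of `V` by how many edges they span expresses the first independence
numbers through simple statistics of `G`: `i₁ = |V|`, `i₂ = C(|V|, 2) - |E|` and
`i₃ = C(|V|, 3) - (|V| - 2) |E| + ∑ᵥ C(deg v, 2) - t(G)`, where `C(deg v, 2)` counts the 3-sets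
with center `v`, i.e. in which `v` is adjacent to both other vertices. So a graph independence
equivalent to `C_n` has `n` vertices, `n` edges and `∑ᵥ C(deg v, 2) ≤ n + t(G)`. On the other
hand `C(d, 2) ≥ d - 1`, with strict inequality unless `d ∈ {1, 2}`; summing over `v` and using
`∑ᵥ deg v = 2n` gives the bound.
-/

lemma Nat.ite_add_le_choose_two_add_one (d : ℕ) :
    (if d ≠ 1 ∧ d ≠ 2 then 1 else 0) + d ≤ d.choose 2 + 1 := by
  rcases d with _ | _ | _ | d
  · simp
  · simp
  · simp
  · have : 0 < (d + 2).choose 2 := Nat.choose_pos (by omega)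
    rw [Nat.choose_succ_succ', Nat.choose_one_right]
    simp only [Nat.reduceAdd, if_pos (show d + 3 ≠ 1 ∧ d + 3 ≠ 2 by omega)]
    omega

namespace SimpleGraph

variable {V : Type*} [Fintype V] (G : SimpleGraph V) [DecidableRel G.Adj]

section Counting

variable [DecidableEq V]

lemma indepCount_eq_card_filter (k : ℕ) :
    indepCount G k = #{s ∈ powersetCard k univ | ∀ u ∈ s, ∀ v ∈ s, ¬ G.Adj u v} := by
  rw [indepCount, Nat.card_eq_fintype_card, Fintype.card_subtype]
  congr 1
  ext s
  simp

lemma triangleCount_eq_card_filter :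
    triangleCount G = #{s ∈ powersetCard 3 univ | ∀ u ∈ s, ∀ v ∈ s, u ≠ v → G.Adj u v} := by
  rw [triangleCount, Nat.card_eq_fintype_card, Fintype.card_subtype]
  congr 1
  ext s
  simp

lemma card_filter_powersetCard_univ_pair_subset {u v : V} (huv : u ≠ v) {k : ℕ} (hk : 2 ≤ k) :
    #{s ∈ powersetCard k univ | u ∈ s ∧ v ∈ s} = (Fintype.card V - 2).choose (k - 2) := by
  have := card_filter_powersetCard_subset {u, v} univ k (subset_univ _)
    (by rwa [card_pair huv])
  rw [card_pair huv, card_univ] at this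
  rw [← this]
  simp only [insert_subset_iff, singleton_subset_iff]

lemma sum_card_adj_pairs_powersetCard {k : ℕ} (hk : 2 ≤ k) :
    ∑ s ∈ powersetCard k univ, #{p ∈ s ×ˢ s | G.Adj p.1 p.2}
      = (Fintype.card V - 2).choose (k - 2) * (2 * #G.edgeFinset) := by
  let r : Finset V → V × V → Prop := fun s p => p.1 ∈ s ∧ p.2 ∈ s ∧ G.Adj p.1 p.2
  calc ∑ s ∈ powersetCard k univ, #{p ∈ s ×ˢ s | G.Adj p.1 p.2}
      = ∑ s ∈ powersetCard k univ, #(univ.bipartiteAbove r s) := by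
        refine sum_congr rfl fun s _ => congrArg card ?_
        ext p
        simp [r, bipartiteAbove, and_assoc]
    _ = ∑ p : V × V, #((powersetCard k univ).bipartiteBelow r p) :=
        sum_card_bipartiteAbove_eq_sum_card_bipartiteBelow r
    _ = ∑ p : V × V, if G.Adj p.1 p.2 then (Fintype.card V - 2).choose (k - 2) else 0 := by
        refine sum_congr rfl fun p _ => ?_
        split_ifs with hp
        · rw [← card_filter_powersetCard_univ_pair_subset hp.ne hk]
          simp [r, bipartiteBelow, hp]
        · simp [r, bipartiteBelow, hp]
    _ = _ := by
        rw [sum_ite, sum_const_zero, add_zero, sum_const, smul_eq_mul, mul_comm,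
          two_mul_card_edgeFinset]

lemma card_filter_powersetCard_three_center (v : V) :
    #{s ∈ powersetCard 3 univ | v ∈ s ∧ s ⊆ insert v (G.neighborFinset v)}
      = (G.degree v).choose 2 := by
  have hv : v ∉ G.neighborFinset v := G.notMem_neighborFinset_self v
  have := card_filter_powersetCard_subset {v} (insert v (G.neighborFinset v)) 3
    (by simp) (by simp)
  rw [card_insert_of_notMem hv, card_singleton, card_neighborFinset_eq_degree,
    Nat.add_sub_cancel] at this
  rw [← this]
  congr 1
  ext s
  simp only [mem_filter, mem_powersetCard, subset_univ, singleton_subset_iff]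
  tauto

lemma sum_card_centers_powersetCard_three :
    ∑ s ∈ powersetCard 3 univ, #{v ∈ s | s ⊆ insert v (G.neighborFinset v)}
      = ∑ v, (G.degree v).choose 2 := by
  let r : Finset V → V → Prop := fun s v => v ∈ s ∧ s ⊆ insert v (G.neighborFinset v)
  calc ∑ s ∈ powersetCard 3 univ, #{v ∈ s | s ⊆ insert v (G.neighborFinset v)}
      = ∑ s ∈ powersetCard 3 univ, #(univ.bipartiteAbove r s) := by
        refine sum_congr rfl fun s _ => congrArg card ?_
        ext v
        simp [r, bipartiteAbove]
    _ = ∑ v, #((powersetCard 3 univ).bipartiteBelow r v) :=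
        sum_card_bipartiteAbove_eq_sum_card_bipartiteBelow r
    _ = _ := sum_congr rfl fun v _ => G.card_filter_powersetCard_three_center v

lemma card_adj_pairs_of_card_eq_two {s : Finset V} (hs : #s = 2) :
    2 * (if ∀ u ∈ s, ∀ v ∈ s, ¬ G.Adj u v then 1 else 0) + #{p ∈ s ×ˢ s | G.Adj p.1 p.2}
      = 2 := by
  obtain ⟨a, b, hab, rfl⟩ := card_eq_two.mp hs
  simp only [card_filter, sum_product]
  by_cases hAB : G.Adj a b <;>
    simp [sum_insert, hab, hAB, G.adj_comm b a, -sum_boole]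

/-- A 3-set spanning `0, 1, 2, 3` edges has `0, 0, 1, 3` centers respectively. -/
lemma card_adj_pairs_of_card_eq_three {s : Finset V} (hs : #s = 3) :
    2 * (if ∀ u ∈ s, ∀ v ∈ s, ¬ G.Adj u v then 1 else 0) + #{p ∈ s ×ˢ s | G.Adj p.1 p.2}
      + 2 * (if ∀ u ∈ s, ∀ v ∈ s, u ≠ v → G.Adj u v then 1 else 0)
      = 2 + 2 * #{v ∈ s | s ⊆ insert v (G.neighborFinset v)} := by
  obtain ⟨a, b, c, hab, hac, hbc, rfl⟩ := card_eq_three.mp hs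
  simp only [card_filter, sum_product]
  by_cases hAB : G.Adj a b <;> by_cases hAC : G.Adj a c <;> by_cases hBC : G.Adj b c <;>
    simp [sum_insert, insert_subset_iff, hab, hac, hbc, hab.symm, hac.symm, hbc.symm,
      hAB, hAC, hBC, G.adj_comm b a, G.adj_comm c a, G.adj_comm c b, -sum_boole]

lemma indepCount_one : indepCount G 1 = Fintype.card V := by
  rw [indepCount_eq_card_filter, filter_true_of_mem, card_powersetCard, card_univ,
    Nat.choose_one_right]
  intro s hs
  obtain ⟨a, rfl⟩ := card_eq_one.mp (mem_powersetCard_univ.mp hs)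
  simp

lemma indepCount_two_add_card_edgeFinset :
    indepCount G 2 + #G.edgeFinset = (Fintype.card V).choose 2 := by
  have key := sum_congr rfl fun s hs =>
    G.card_adj_pairs_of_card_eq_two (mem_powersetCard_univ.mp hs)
  rw [sum_add_distrib, ← mul_sum, ← card_filter, sum_card_adj_pairs_powersetCard G le_rfl,
    sum_const, card_powersetCard, card_univ, smul_eq_mul, ← indepCount_eq_card_filter] at key
  simp only [Nat.sub_self, Nat.choose_zero_right] at key
  omega

lemma indepCount_three_add_triangleCount :
    indepCount G 3 + (Fintype.card V - 2) * #G.edgeFinset + triangleCount G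
      = (Fintype.card V).choose 3 + ∑ v, (G.degree v).choose 2 := by
  have key := sum_congr rfl fun s hs =>
    G.card_adj_pairs_of_card_eq_three (mem_powersetCard_univ.mp hs)
  rw [sum_add_distrib, sum_add_distrib, sum_add_distrib, ← mul_sum, ← mul_sum, ← mul_sum,
    ← card_filter, ← card_filter, sum_card_adj_pairs_powersetCard G (by norm_num),
    sum_card_centers_powersetCard_three, sum_const, card_powersetCard, card_univ, smul_eq_mul,
    ← indepCount_eq_card_filter, ← triangleCount_eq_card_filter] at key
  simp only [Nat.choose_one_right, show 3 - 2 = 1 from rfl] at key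
  linarith

variable {W : Type*} [Fintype W] [DecidableEq W] {H : SimpleGraph W} [DecidableRel H.Adj]

lemma card_eq_of_indepCount_eq (h : ∀ k, indepCount G k = indepCount H k) :
    Fintype.card V = Fintype.card W := by
  rw [← G.indepCount_one, ← H.indepCount_one, h]

lemma card_edgeFinset_eq_of_indepCount_eq (h : ∀ k, indepCount G k = indepCount H k) :
    #G.edgeFinset = #H.edgeFinset := by
  have hG := G.indepCount_two_add_card_edgeFinset
  rw [h, card_eq_of_indepCount_eq G h, ← H.indepCount_two_add_card_edgeFinset] at hG
  omega

lemma sum_choose_degree_add_triangleCount_eq_of_indepCount_eq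
    (h : ∀ k, indepCount G k = indepCount H k) :
    ∑ v, (G.degree v).choose 2 + triangleCount H
      = ∑ w, (H.degree w).choose 2 + triangleCount G := by
  have hG := G.indepCount_three_add_triangleCount
  have hH := H.indepCount_three_add_triangleCount
  rw [h, card_eq_of_indepCount_eq G h, card_edgeFinset_eq_of_indepCount_eq G h] at hG
  linarith

end Counting

lemma card_filter_degree_ne_one_two_add_sum_degree_le :
    #{v | G.degree v ≠ 1 ∧ G.degree v ≠ 2} + ∑ v, G.degree v
      ≤ ∑ v, (G.degree v).choose 2 + Fintype.card V := by
  rw [card_filter, ← sum_add_distrib, ← card_univ, card_eq_sum_ones, ← sum_add_distrib]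
  exact sum_le_sum fun v _ => Nat.ite_add_le_choose_two_add_one (G.degree v)

end SimpleGraph

theorem triangleCount_ge_of_indepEquiv_cycle {V : Type*} [Fintype V] (G : SimpleGraph V)
    [DecidableRel G.Adj] (n : ℕ) (hn : 4 ≤ n)
    (h : ∀ k, indepCount G k = indepCount (SimpleGraph.cycleGraph n) k) :
    (Finset.univ.filter fun v : V => G.degree v ≠ 1 ∧ G.degree v ≠ 2).card
      ≤ triangleCount G := by
  classical
  obtain ⟨m, rfl⟩ : ∃ m, n = m + 3 := ⟨n - 3, by omega⟩
  have hdeg (v : Fin (m + 3)) : (cycleGraph (m + 3)).degree v = 2 := cycleGraph_degree_three_le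
  have hcard := G.card_eq_of_indepCount_eq h
  have hsum_deg : ∑ v, G.degree v = 2 * (m + 3) := by
    rw [sum_degrees_eq_twice_card_edges, G.card_edgeFinset_eq_of_indepCount_eq h,
      ← sum_degrees_eq_twice_card_edges]
    simp [hdeg, mul_comm]
  have htri := G.sum_choose_degree_add_triangleCount_eq_of_indepCount_eq h
  have hloc := G.card_filter_degree_ne_one_two_add_sum_degree_le
  simp only [hdeg, Nat.choose_self, sum_const, card_univ, Fintype.card_fin, smul_eq_mul,
    mul_one] at htri
  rw [Fintype.card_fin] at hcard
  omega
end
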